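/- arXiv:math/0409424 — 15 statements merged into one kernel-verified Lean document; each statement's English description precedes it below -/
import Mathlib

section
/- Let n, m₁, m₂ be positive integers and let A, B, C be complex matrices of sizes n×n, n×m₁ and m₂×n respectively, such that the pair (A,B) is full range, the pair (A*,C*) is full range, and for every real λ for which λIₙ − A is invertible the matrix R(λ) = C(λIₙ − A)⁻¹B satisfies R(λ)*R(λ) ≤ I_{m₁}. Let X be a Hermitian n×n matrix satisfying i(XA − A*X) = C*C + XBB*X and such that every eigenvalue of A + iBB*X has nonpositive imaginary part. Then X is positive definite if and only if every eigenvalue of A has nonpositive imaginary part (equivalently, if and only if R(λ) = C(λIₙ − A)⁻¹B is defined and contractive at every λ in the open upper half-plane). -/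
open Matrix
open scoped ComplexOrder

/-- A pair `(A, B)` is full range (controllable) if the columns of
`B, A*B, …, A^(n-1)*B` span `ℂⁿ`. -/
def FullRange {n k : ℕ} (A : Matrix (Fin n) (Fin n) ℂ)
    (B : Matrix (Fin n) (Fin k) ℂ) : Prop :=
  Submodule.span ℂ
    (Set.range fun p : Fin n × Fin k => fun i => (A ^ (p.1 : ℕ) * B) i p.2) = ⊤

open Filter

/-- spectrum membership gives an eigenvector, and conversely -/
lemma mem_spectrum_iff_eig {n : ℕ} {M : Matrix (Fin n) (Fin n) ℂ} {μ : ℂ} :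
    μ ∈ spectrum ℂ M ↔ ∃ v, v ≠ 0 ∧ M *ᵥ v = μ • v := by
  rw [spectrum.mem_iff, Algebra.algebraMap_eq_smul_one]
  constructor
  · intro h
    have hdet : (μ • (1 : Matrix (Fin n) (Fin n) ℂ) - M).det = 0 := by
      by_contra hd
      exact h ((Matrix.isUnit_iff_isUnit_det _).2 (isUnit_iff_ne_zero.2 hd))
    obtain ⟨v, hv, hv0⟩ := (Matrix.exists_mulVec_eq_zero_iff).2 hdet
    refine ⟨v, hv, ?_⟩
    rw [sub_mulVec, smul_mulVec, one_mulVec, sub_eq_zero] at hv0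
    exact hv0.symm
  · rintro ⟨v, hv, hv0⟩ hu
    have hdet : (μ • (1 : Matrix (Fin n) (Fin n) ℂ) - M).det ≠ 0 :=
      isUnit_iff_ne_zero.1 ((Matrix.isUnit_iff_isUnit_det _).1 hu)
    have : ∃ w ≠ 0, (μ • (1 : Matrix (Fin n) (Fin n) ℂ) - M) *ᵥ w = 0 :=
      ⟨v, hv, by rw [sub_mulVec, smul_mulVec, one_mulVec, hv0, sub_self]⟩
    exact hdet (Matrix.exists_mulVec_eq_zero_iff.1 this)

/-- observability: if `C A^k v = 0` for all `k` then `v = 0`. -/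
lemma obs_aux {n m₂ : ℕ} {A : Matrix (Fin n) (Fin n) ℂ} {C : Matrix (Fin m₂) (Fin n) ℂ}
    (hAC : FullRange Aᴴ Cᴴ) {v : Fin n → ℂ}
    (hv : ∀ k : ℕ, C *ᵥ (A ^ k *ᵥ v) = 0) : v = 0 := by
  have key : ∀ w : Fin n → ℂ, w ⬝ᵥ star v = 0 := by
    intro w
    have hw : w ∈ Submodule.span ℂ
        (Set.range fun p : Fin n × Fin m₂ => fun i => ((Aᴴ) ^ (p.1 : ℕ) * Cᴴ) i p.2) := by
      rw [hAC]; trivial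
    induction hw using Submodule.span_induction with
    | mem x hx =>
        obtain ⟨⟨p, j⟩, rfl⟩ := hx
        have hentry : ∀ i, ((Aᴴ) ^ (p : ℕ) * Cᴴ) i j = star ((C * A ^ (p : ℕ)) j i) := by
          intro i
          rw [← conjTranspose_pow, ← conjTranspose_mul, conjTranspose_apply]
        simp only [dotProduct, hentry, Pi.star_apply, ← star_mul']
        rw [← star_sum]
        have : ∑ i, (C * A ^ (p : ℕ)) j i * v i = ((C * A ^ (p : ℕ)) *ᵥ v) j := rfl
        rw [this, ← mulVec_mulVec, hv (p : ℕ)]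
        simp
    | zero => simp
    | add x y _ _ hx hy => rw [add_dotProduct, hx, hy, add_zero]
    | smul c x _ hx => rw [smul_dotProduct, hx, smul_zero]
  funext i
  have := key (Pi.single i 1)
  rw [single_dotProduct, one_mul, Pi.star_apply] at this
  simpa using congrArg star this
section
variable {n m₁ m₂ : ℕ}
variable {A X : Matrix (Fin n) (Fin n) ℂ} {B : Matrix (Fin n) (Fin m₁) ℂ}
  {C : Matrix (Fin m₂) (Fin n) ℂ} {v : Fin n → ℂ}

lemma dot_conj {m k : ℕ} (M : Matrix (Fin m) (Fin k) ℂ) (v : Fin k → ℂ) (w : Fin m → ℂ) :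
    star v ⬝ᵥ (Mᴴ *ᵥ w) = star (M *ᵥ v) ⬝ᵥ w := by
  rw [star_mulVec, dotProduct_mulVec]

lemma XBBX_eq (hX : X.IsHermitian) : (X * B * Bᴴ * X) = (Bᴴ * X)ᴴ * (Bᴴ * X) := by
  rw [conjTranspose_mul, conjTranspose_conjTranspose, hX.eq, Matrix.mul_assoc]

lemma W_posSemidef (hX : X.IsHermitian) : (Cᴴ * C + X * B * Bᴴ * X).PosSemidef := by
  rw [XBBX_eq hX]
  exact (posSemidef_conjTranspose_mul_self C).add (posSemidef_conjTranspose_mul_self _)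

/-- quadratic form of the Riccati identity -/
lemma quad_form (hRic : Complex.I • (X * A - Aᴴ * X) = Cᴴ * C + X * B * Bᴴ * X)
    (v : Fin n → ℂ) :
    Complex.I * (star v ⬝ᵥ (X *ᵥ (A *ᵥ v)) - star (A *ᵥ v) ⬝ᵥ (X *ᵥ v)) =
      star v ⬝ᵥ ((Cᴴ * C + X * B * Bᴴ * X) *ᵥ v) := by
  rw [← hRic, smul_mulVec, dotProduct_smul, smul_eq_mul, sub_mulVec,
    dotProduct_sub]
  congr 2
  · rw [← mulVec_mulVec]
  · rw [← mulVec_mulVec, dot_conj]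

/-- if the `W`-form vanishes at `v` then `C *ᵥ v = 0`. -/
lemma Cv_eq_zero (hX : X.IsHermitian)
    (hzero : star v ⬝ᵥ ((Cᴴ * C + X * B * Bᴴ * X) *ᵥ v) = 0) :
    C *ᵥ v = 0 := by
  have h1 : (0:ℂ) ≤ star v ⬝ᵥ ((Cᴴ * C) *ᵥ v) := (posSemidef_conjTranspose_mul_self C).dotProduct_mulVec_nonneg v
  have h2 : (0:ℂ) ≤ star v ⬝ᵥ ((X * B * Bᴴ * X) *ᵥ v) := by
    rw [XBBX_eq hX]
    exact (posSemidef_conjTranspose_mul_self _).dotProduct_mulVec_nonneg v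
  rw [add_mulVec, dotProduct_add] at hzero
  have hC0 : star v ⬝ᵥ ((Cᴴ * C) *ᵥ v) = 0 := by
    refine le_antisymm ?_ h1
    calc star v ⬝ᵥ ((Cᴴ * C) *ᵥ v) = -(star v ⬝ᵥ ((X * B * Bᴴ * X) *ᵥ v)) := by
          linear_combination hzero
      _ ≤ 0 := neg_nonpos.2 h2
  rw [← mulVec_mulVec, dot_conj] at hC0
  exact dotProduct_star_self_eq_zero.1 hC0
end

section
variable {n m₁ m₂ : ℕ}
variable {A X : Matrix (Fin n) (Fin n) ℂ} {B : Matrix (Fin n) (Fin m₁) ℂ}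
  {C : Matrix (Fin m₂) (Fin n) ℂ}

/-- kernel of `X` step lemma -/
lemma ker_step (hX : X.IsHermitian)
    (hRic : Complex.I • (X * A - Aᴴ * X) = Cᴴ * C + X * B * Bᴴ * X)
    {w : Fin n → ℂ} (hw : X *ᵥ w = 0) :
    C *ᵥ w = 0 ∧ X *ᵥ (A *ᵥ w) = 0 := by
  have hq := quad_form hRic w
  have hfirst : star w ⬝ᵥ (X *ᵥ (A *ᵥ w)) = 0 := by
    have : star w ⬝ᵥ (X *ᵥ (A *ᵥ w)) = star (X *ᵥ w) ⬝ᵥ (A *ᵥ w) := by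
      conv_lhs => rw [← hX.eq]
      exact dot_conj X w (A *ᵥ w)
    rw [this, hw]; simp
  rw [hfirst, hw, dotProduct_zero, sub_zero, mul_zero] at hq
  have hC : C *ᵥ w = 0 := Cv_eq_zero hX hq.symm
  refine ⟨hC, ?_⟩
  -- apply the Riccati identity as matrices to `w`
  have hmv := congrArg (fun M => M *ᵥ w) hRic
  simp only [smul_mulVec, sub_mulVec, add_mulVec] at hmv
  rw [show (X * A) *ᵥ w = X *ᵥ (A *ᵥ w) from (mulVec_mulVec _ _ _).symm,
      show (Aᴴ * X) *ᵥ w = Aᴴ *ᵥ (X *ᵥ w) from (mulVec_mulVec _ _ _).symm,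
      show (Cᴴ * C) *ᵥ w = Cᴴ *ᵥ (C *ᵥ w) from (mulVec_mulVec _ _ _).symm,
      show (X * B * Bᴴ * X) *ᵥ w = (X * B * Bᴴ) *ᵥ (X *ᵥ w) from (mulVec_mulVec _ _ _).symm,
      hw, hC] at hmv
  simp only [mulVec_zero, sub_zero, add_zero, zero_add] at hmv
  have := hmv
  rwa [smul_eq_zero_iff_right Complex.I_ne_zero] at this

/-- `X` is injective -/
lemma X_inj (hX : X.IsHermitian)
    (hRic : Complex.I • (X * A - Aᴴ * X) = Cᴴ * C + X * B * Bᴴ * X)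
    (hAC : FullRange Aᴴ Cᴴ) {v : Fin n → ℂ} (hv : X *ᵥ v = 0) : v = 0 := by
  have hker : ∀ k : ℕ, X *ᵥ (A ^ k *ᵥ v) = 0 := by
    intro k
    induction k with
    | zero => simpa using hv
    | succ k ih =>
        rw [pow_succ', ← mulVec_mulVec]
        exact (ker_step hX hRic ih).2
  exact obs_aux hAC fun k => (ker_step hX hRic (hker k)).1

/-- under observability, every eigenvalue of `A` with nonpositive imaginary part has
negative imaginary part -/
lemma spectrum_im_neg (hX : X.IsHermitian)
    (hRic : Complex.I • (X * A - Aᴴ * X) = Cᴴ * C + X * B * Bᴴ * X)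
    (hAC : FullRange Aᴴ Cᴴ)
    (hA : ∀ μ ∈ spectrum ℂ A, μ.im ≤ 0) :
    ∀ μ ∈ spectrum ℂ A, μ.im < 0 := by
  intro μ hμ
  rcases lt_or_eq_of_le (hA μ hμ) with h | h
  · exact h
  · exfalso
    obtain ⟨v, hv, heig⟩ := mem_spectrum_iff_eig.1 hμ
    have hq := quad_form hRic v
    have hμreal : (starRingEnd ℂ) μ = μ := Complex.conj_eq_iff_im.2 h
    rw [heig] at hq
    rw [mulVec_smul, dotProduct_smul, star_smul, smul_dotProduct] at hq
    rw [Complex.star_def, hμreal] at hq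
    simp only [smul_eq_mul, sub_self, mul_zero] at hq
    have hC : C *ᵥ v = 0 := Cv_eq_zero hX hq.symm
    have hCk : ∀ k : ℕ, C *ᵥ (A ^ k *ᵥ v) = 0 := by
      intro k
      have hk : A ^ k *ᵥ v = μ ^ k • v := by
        induction k with
        | zero => simp
        | succ k ih => rw [pow_succ', ← mulVec_mulVec, ih, mulVec_smul, heig, smul_smul,
            pow_succ', mul_comm]
      rw [hk, mulVec_smul, hC, smul_zero]
    exact hv (obs_aux hAC hCk)
end



attribute [local instance] Matrix.linftyOpNormedRing Matrix.linftyOpNormedAlgebra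

lemma spectralRadius_lt_one {n : ℕ} (T : Matrix (Fin n) (Fin n) ℂ)
    (h : ∀ μ ∈ spectrum ℂ T, ‖μ‖ < 1) : spectralRadius ℂ T < 1 := by
  rcases (spectrum ℂ T).eq_empty_or_nonempty with he | hne
  · rw [spectralRadius, he]
    simp
  · obtain ⟨μ₀, hμ₀, hmax⟩ :=
      (spectrum.isCompact T).exists_isMaxOn hne (continuous_norm.continuousOn)
    calc spectralRadius ℂ T ≤ (‖μ₀‖₊ : ENNReal) := by
          refine iSup₂_le fun μ hμ => ?_
          exact_mod_cast (hmax hμ : ‖μ‖ ≤ ‖μ₀‖)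
      _ < 1 := by exact_mod_cast h μ₀ hμ₀

lemma exists_pow_norm_lt {n : ℕ} (T : Matrix (Fin n) (Fin n) ℂ)
    (h : ∀ μ ∈ spectrum ℂ T, ‖μ‖ < 1) {ε : ℝ} (hε : 0 < ε) :
    ∃ N : ℕ, ‖T ^ N‖ < ε := by
  have hρ : spectralRadius ℂ T < 1 := spectralRadius_lt_one T h
  have hten := spectrum.pow_nnnorm_pow_one_div_tendsto_nhds_spectralRadius T
  have hev : ∀ᶠ N : ℕ in atTop, ((‖T ^ N‖₊ : ENNReal)) ^ (1 / (N : ℝ)) < 1 :=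
    hten.eventually_lt_const hρ
  obtain ⟨m, hm1, hm2⟩ := ((eventually_ge_atTop 1).and hev).exists
  have hTm : ‖T ^ m‖ < 1 := by
    by_contra hc
    push_neg at hc
    have h1 : (1 : ENNReal) ≤ (‖T ^ m‖₊ : ENNReal) := by
      exact_mod_cast (show (1:ℝ) ≤ ‖T ^ m‖ from hc)
    have : (1 : ENNReal) ≤ ((‖T ^ m‖₊ : ENNReal)) ^ (1 / (m : ℝ)) :=
      ENNReal.one_le_rpow h1 (by positivity)
    exact absurd hm2 (not_lt.2 this)
  have hball := tendsto_pow_atTop_nhds_zero_of_lt_one (norm_nonneg (T ^ m)) hTm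
  obtain ⟨k, hk1, hk2⟩ := ((eventually_ge_atTop 1).and
    (hball.eventually (gt_mem_nhds hε))).exists
  refine ⟨m * k, ?_⟩
  calc ‖T ^ (m * k)‖ = ‖(T ^ m) ^ k‖ := by rw [pow_mul]
    _ ≤ ‖T ^ m‖ ^ k := norm_pow_le' _ hk1
    _ < ε := hk2

lemma posSemidef_of_lyap {n : ℕ} (X T W₂ : Matrix (Fin n) (Fin n) ℂ)
    (hX : X.IsHermitian) (hW₂ : W₂.PosSemidef)
    (hid : X = W₂ + Tᴴ * X * T)
    (hT : ∀ μ ∈ spectrum ℂ T, ‖μ‖ < 1) : X.PosSemidef := by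
  refine PosSemidef.of_dotProduct_mulVec_nonneg hX fun v => ?_
  set q : ℕ → ℂ := fun k => star (T ^ k *ᵥ v) ⬝ᵥ (X *ᵥ (T ^ k *ᵥ v)) with hq
  -- each q k is "real": conj (q k) = q k
  have hreal : ∀ (w : Fin n → ℂ), star (star w ⬝ᵥ (X *ᵥ w)) = star w ⬝ᵥ (X *ᵥ w) := by
    intro w
    calc star (star w ⬝ᵥ (X *ᵥ w)) = star (X *ᵥ w) ⬝ᵥ star (star w) :=
          (star_dotProduct_star _ _).symm
      _ = star (X *ᵥ w) ⬝ᵥ w := by rw [star_star]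
      _ = star w ⬝ᵥ (X *ᵥ w) := by
          rw [← dot_conj X w w, hX.eq]
  -- monotonicity
  have hstep : ∀ k, q (k + 1) ≤ q k := by
    intro k
    set w := T ^ k *ᵥ v with hw
    have h1 : q k = star w ⬝ᵥ (W₂ *ᵥ w) + q (k + 1) := by
      have hXw : X *ᵥ w = W₂ *ᵥ w + (Tᴴ * X * T) *ᵥ w := by
        conv_lhs => rw [hid]
        rw [add_mulVec]
      have h2 : star w ⬝ᵥ ((Tᴴ * X * T) *ᵥ w) = q (k + 1) := by
        have : (Tᴴ * X * T) *ᵥ w = Tᴴ *ᵥ (X *ᵥ (T *ᵥ w)) := by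
          rw [← mulVec_mulVec, ← mulVec_mulVec]
        rw [this, dot_conj T w (X *ᵥ (T *ᵥ w))]
        have hTw : T ^ (k+1) *ᵥ v = T *ᵥ w := by
          rw [hw, mulVec_mulVec, ← pow_succ']
        rw [hq]
        simp only []
        rw [hTw]
      rw [hq]
      simp only []
      rw [hXw, dotProduct_add, h2]
    rw [h1]
    exact le_add_of_nonneg_left (hW₂.dotProduct_mulVec_nonneg w)
  have hmono : ∀ N, q N ≤ q 0 := by
    intro N
    induction N with
    | zero => exact le_rfl
    | succ k ih => exact (hstep k).trans ih
  -- real parts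
  have him : (q 0).im = 0 := by
    have := hreal v
    rw [Complex.star_def, Complex.conj_eq_iff_im] at this
    simpa [hq] using this
  -- bound: q N ≥ -(n * ‖X‖ * (‖T^N‖ * ‖v‖)^2)
  have hbound : ∀ N : ℕ, -((n : ℝ) * ‖X‖ * (‖T ^ N‖ * ‖v‖) ^ 2) ≤ (q N).re := by
    intro N
    set w := T ^ N *ᵥ v with hw
    have habs : ‖q N‖ ≤ (n : ℝ) * ‖X‖ * (‖T ^ N‖ * ‖v‖) ^ 2 := by
      have h1 : ‖q N‖ ≤ ∑ i, ‖w i‖ * ‖(X *ᵥ w) i‖ := by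
        rw [hq]
        simp only []
        rw [← hw, dotProduct]
        refine (norm_sum_le _ _).trans ?_
        refine Finset.sum_le_sum fun i _ => ?_
        have : ‖star w i * (X *ᵥ w) i‖ = ‖w i‖ * ‖(X *ᵥ w) i‖ := by
          rw [norm_mul, Pi.star_apply, norm_star]
        exact this.le
      have h2 : ∀ i, ‖w i‖ * ‖(X *ᵥ w) i‖ ≤ ‖w‖ * (‖X‖ * ‖w‖) := by
        intro i
        have := norm_le_pi_norm w i
        have := norm_le_pi_norm (X *ᵥ w) i
        have hXw : ‖X *ᵥ w‖ ≤ ‖X‖ * ‖w‖ := Matrix.linfty_opNorm_mulVec X w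
        have h0 : (0:ℝ) ≤ ‖w i‖ := norm_nonneg _
        nlinarith [norm_nonneg w, norm_nonneg (X *ᵥ w), norm_le_pi_norm w i,
          norm_le_pi_norm (X *ᵥ w) i, norm_nonneg (w i), norm_nonneg ((X *ᵥ w) i)]
      have h3 : ∑ i, ‖w i‖ * ‖(X *ᵥ w) i‖ ≤ (n : ℝ) * (‖w‖ * (‖X‖ * ‖w‖)) := by
        calc ∑ i, ‖w i‖ * ‖(X *ᵥ w) i‖ ≤ ∑ _i : Fin n, ‖w‖ * (‖X‖ * ‖w‖) :=
              Finset.sum_le_sum fun i _ => h2 i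
          _ = (n : ℝ) * (‖w‖ * (‖X‖ * ‖w‖)) := by simp [Finset.sum_const, mul_comm]
      have hnw : ‖w‖ ≤ ‖T ^ N‖ * ‖v‖ := Matrix.linfty_opNorm_mulVec _ v
      calc ‖q N‖ ≤ ∑ i, ‖w i‖ * ‖(X *ᵥ w) i‖ := h1
        _ ≤ (n : ℝ) * (‖w‖ * (‖X‖ * ‖w‖)) := h3
        _ ≤ (n : ℝ) * ‖X‖ * (‖T ^ N‖ * ‖v‖) ^ 2 := by
            have hw2 : ‖w‖ * ‖w‖ ≤ (‖T ^ N‖ * ‖v‖) * (‖T ^ N‖ * ‖v‖) :=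
              mul_le_mul hnw hnw (norm_nonneg w) (by positivity)
            nlinarith [hw2, mul_nonneg (Nat.cast_nonneg (α := ℝ) n) (norm_nonneg X)]
    have := neg_abs_le (q N).re
    have habs' : |(q N).re| ≤ ‖q N‖ := Complex.abs_re_le_norm _
    linarith
  -- conclude 0 ≤ re (q 0)
  have hre : 0 ≤ (q 0).re := by
    by_contra hc
    push_neg at hc
    set ε := -(q 0).re with hε
    have hεpos : 0 < ε := by simp [hε]; linarith
    have hK : (0:ℝ) < (n : ℝ) * ‖X‖ * ‖v‖ ^ 2 + 1 := by positivity
    set δ := min 1 (ε / ((n : ℝ) * ‖X‖ * ‖v‖ ^ 2 + 1)) with hδ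
    have hδpos : 0 < δ := lt_min one_pos (by positivity)
    obtain ⟨N, hN⟩ := exists_pow_norm_lt T hT hδpos
    have h1 : (q N).re ≤ (q 0).re := (Complex.le_def.1 (hmono N)).1
    have h2 := hbound N
    have hTN : (0:ℝ) ≤ ‖T ^ N‖ := norm_nonneg _
    have hδ1 : δ ≤ 1 := min_le_left _ _
    have hδ2 : δ ≤ ε / ((n : ℝ) * ‖X‖ * ‖v‖ ^ 2 + 1) := min_le_right _ _
    have hX0 : (0:ℝ) ≤ ‖X‖ := norm_nonneg _
    have hv0 : (0:ℝ) ≤ ‖v‖ := norm_nonneg _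
    have hn0 : (0:ℝ) ≤ (n:ℝ) := Nat.cast_nonneg _
    -- (n ‖X‖ (‖T^N‖ ‖v‖)^2) < ε
    have hkey : (n : ℝ) * ‖X‖ * (‖T ^ N‖ * ‖v‖) ^ 2 < ε := by
      have hδδ : ‖T ^ N‖ ^ 2 ≤ δ := by nlinarith
      have hmul : (n : ℝ) * ‖X‖ * ‖v‖ ^ 2 * ‖T ^ N‖ ^ 2 ≤ (n : ℝ) * ‖X‖ * ‖v‖ ^ 2 * δ :=
        mul_le_mul_of_nonneg_left hδδ (by positivity)
      have : (n : ℝ) * ‖X‖ * (‖T ^ N‖ * ‖v‖) ^ 2 ≤ δ * ((n : ℝ) * ‖X‖ * ‖v‖ ^ 2) := by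
        nlinarith [hmul]
      have hlt : δ * ((n : ℝ) * ‖X‖ * ‖v‖ ^ 2) < ε := by
        calc δ * ((n : ℝ) * ‖X‖ * ‖v‖ ^ 2)
            ≤ (ε / ((n : ℝ) * ‖X‖ * ‖v‖ ^ 2 + 1)) * ((n : ℝ) * ‖X‖ * ‖v‖ ^ 2) := by
              exact mul_le_mul_of_nonneg_right hδ2 (by positivity)
          _ < ε := by
              rw [div_mul_eq_mul_div, div_lt_iff₀ hK]
              nlinarith
      linarith
    linarith
  rw [hq] at hre him
  simp only [] at hre him
  exact Complex.le_def.2 ⟨by simpa using hre, by simpa using him.symm⟩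

lemma posSemidef_of_riccati {n m₁ m₂ : ℕ}
    {A X : Matrix (Fin n) (Fin n) ℂ} {B : Matrix (Fin n) (Fin m₁) ℂ}
    {C : Matrix (Fin m₂) (Fin n) ℂ}
    (hX : X.IsHermitian)
    (hRic : Complex.I • (X * A - Aᴴ * X) = Cᴴ * C + X * B * Bᴴ * X)
    (hA' : ∀ μ ∈ spectrum ℂ A, μ.im < 0) : X.PosSemidef := by
  set W := Cᴴ * C + X * B * Bᴴ * X with hW
  set D := A - Complex.I • 1 with hD
  set E := A + Complex.I • 1 with hE
  have hDdet : IsUnit D.det := by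
    rw [isUnit_iff_ne_zero]
    intro h0
    obtain ⟨v, hv, hv0⟩ := Matrix.exists_mulVec_eq_zero_iff.2 h0
    have heig : A *ᵥ v = Complex.I • v := by
      rw [hD, sub_mulVec, smul_mulVec, one_mulVec, sub_eq_zero] at hv0
      exact hv0
    have := hA' Complex.I (mem_spectrum_iff_eig.2 ⟨v, hv, heig⟩)
    rw [Complex.I_im] at this
    linarith
  have hD1 : D * D⁻¹ = 1 := mul_nonsing_inv D hDdet
  have hD2 : D⁻¹ * D = 1 := nonsing_inv_mul D hDdet
  set T := E * D⁻¹ with hT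
  set W₂ := (D⁻¹)ᴴ * (W + W) * D⁻¹ with hW₂def
  have hW₂ : W₂.PosSemidef :=
    PosSemidef.conjTranspose_mul_mul_same ((W_posSemidef hX).add (W_posSemidef hX)) D⁻¹
  have hDH : Dᴴ = Aᴴ + Complex.I • 1 := by
    rw [hD, conjTranspose_sub, conjTranspose_smul, conjTranspose_one, Complex.star_def,
      Complex.conj_I, neg_smul, sub_neg_eq_add]
  have hEH : Eᴴ = Aᴴ - Complex.I • 1 := by
    rw [hE, conjTranspose_add, conjTranspose_smul, conjTranspose_one, Complex.star_def,
      Complex.conj_I, neg_smul, ← sub_eq_add_neg]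
  have key : Dᴴ * X * D - Eᴴ * X * E = W + W := by
    rw [hDH, hEH, hD, hE, ← hRic]
    simp only [Matrix.add_mul, Matrix.sub_mul, Matrix.mul_add, Matrix.mul_sub,
      Matrix.smul_mul, Matrix.mul_smul, Matrix.one_mul, Matrix.mul_one, smul_sub,
      smul_add, smul_smul]
    abel
  have hTH : Tᴴ = (D⁻¹)ᴴ * Eᴴ := by rw [hT, conjTranspose_mul]
  have hDinvH : (D⁻¹)ᴴ * Dᴴ = 1 := by rw [← conjTranspose_mul, hD1, conjTranspose_one]
  have hDHinv : Dᴴ * (D⁻¹)ᴴ = 1 := by rw [← conjTranspose_mul, hD2, conjTranspose_one]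
  have hLyapId : X = W₂ + Tᴴ * X * T := by
    have hkey' : Dᴴ * X * D = (W + W) + Eᴴ * X * E := by
      rw [← key]; abel
    calc X = ((D⁻¹)ᴴ * Dᴴ) * X * (D * D⁻¹) := by rw [hDinvH, hD1, Matrix.one_mul, Matrix.mul_one]
      _ = (D⁻¹)ᴴ * (Dᴴ * X * D) * D⁻¹ := by
          simp only [Matrix.mul_assoc]
      _ = (D⁻¹)ᴴ * ((W + W) + Eᴴ * X * E) * D⁻¹ := by rw [hkey']
      _ = W₂ + Tᴴ * X * T := by
          rw [hW₂def, hTH, hT]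
          noncomm_ring
  have hTspec : ∀ μ ∈ spectrum ℂ T, ‖μ‖ < 1 := by
    intro μ hμ
    obtain ⟨v, hv, hTv⟩ := mem_spectrum_iff_eig.1 hμ
    set u := D⁻¹ *ᵥ v with hu
    have hDu : D *ᵥ u = v := by rw [hu, mulVec_mulVec, hD1, one_mulVec]
    have hune : u ≠ 0 := fun h => hv (by rw [← hDu, h, mulVec_zero])
    have hEu : E *ᵥ u = μ • (D *ᵥ u) := by
      rw [hDu, ← hTv, hT, ← mulVec_mulVec, ← hu]
    have h1 : E *ᵥ u = A *ᵥ u + Complex.I • u := by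
      rw [hE, add_mulVec, smul_mulVec, one_mulVec]
    have h2 : D *ᵥ u = A *ᵥ u - Complex.I • u := by
      rw [hD, sub_mulVec, smul_mulVec, one_mulVec]
    have hexp : A *ᵥ u + Complex.I • u = μ • (A *ᵥ u) - (μ * Complex.I) • u := by
      rw [← h1, hEu, h2, smul_sub, smul_smul]
    by_cases hμ1 : μ = 1
    · exfalso
      rw [hμ1, one_smul, one_mul] at hexp
      have h3 : (2 * Complex.I) • u = 0 := by
        have h4 : Complex.I • u + Complex.I • u = 0 := by
          have := sub_eq_zero.2 hexp
          linear_combination (norm := module) hexp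
        rw [two_mul, add_smul]
        exact h4
      rcases smul_eq_zero.1 h3 with h | h
      · simp [Complex.I_ne_zero] at h
      · exact hune h
    · have h1μ : (1 : ℂ) - μ ≠ 0 := sub_ne_zero.2 (Ne.symm hμ1)
      set ν := (-(Complex.I) - Complex.I * μ) / (1 - μ) with hν
      have h4 : (1 - μ) • (A *ᵥ u) = (-(Complex.I) - Complex.I * μ) • u := by
        linear_combination (norm := module) hexp
      have hAu : A *ᵥ u = ν • u := by
        have := congrArg (fun z => (1 - μ)⁻¹ • z) h4
        simp only [smul_smul, inv_mul_cancel₀ h1μ, one_smul] at this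
        rw [this, hν, div_eq_inv_mul]
      have hνmem : ν ∈ spectrum ℂ A := mem_spectrum_iff_eig.2 ⟨u, hune, hAu⟩
      have hνim : ν.im < 0 := hA' ν hνmem
      have hrel : μ * (ν - Complex.I) = ν + Complex.I := by
        rw [hν]
        field_simp
        ring
      have h5 : Complex.normSq μ * Complex.normSq (ν - Complex.I) =
          Complex.normSq (ν + Complex.I) := by
        rw [← _root_.map_mul, hrel]
      have h6 : Complex.normSq (ν + Complex.I) = ν.re ^ 2 + (ν.im + 1) ^ 2 := by
        simp [Complex.normSq_apply]; ring
      have h7 : Complex.normSq (ν - Complex.I) = ν.re ^ 2 + (ν.im - 1) ^ 2 := by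
        simp [Complex.normSq_apply]; ring
      have h8 : Complex.normSq μ < 1 := by
        nlinarith [h5, h6, h7, hνim, sq_nonneg ν.re, sq_nonneg (ν.im - 1)]
      have h9 : ‖μ‖ ^ 2 = Complex.normSq μ := by
        rw [← Complex.sq_norm]
      nlinarith [norm_nonneg μ, h8, h9]
  exact posSemidef_of_lyap X T W₂ hX hW₂ hLyapId hTspec


/-- Lemma 0.2 (positivity criterion): the Hermitian Riccati solution `X` with
`σ(A + iBBᴴX)` in the closed lower half-plane is positive definite iff every
eigenvalue of `A` has nonpositive imaginary part. -/
theorem riccati_solution_posDef_iff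
    (n m₁ m₂ : ℕ) (hn : 0 < n) (hm₁ : 0 < m₁) (hm₂ : 0 < m₂)
    (A : Matrix (Fin n) (Fin n) ℂ) (B : Matrix (Fin n) (Fin m₁) ℂ)
    (C : Matrix (Fin m₂) (Fin n) ℂ)
    (hAB : FullRange A B) (hAC : FullRange Aᴴ Cᴴ)
    (hcontr : ∀ l : ℝ, IsUnit ((l : ℂ) • (1 : Matrix (Fin n) (Fin n) ℂ) - A) →
      ((1 : Matrix (Fin m₁) (Fin m₁) ℂ) -
        (C * ((l : ℂ) • (1 : Matrix (Fin n) (Fin n) ℂ) - A)⁻¹ * B)ᴴ *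
        (C * ((l : ℂ) • (1 : Matrix (Fin n) (Fin n) ℂ) - A)⁻¹ * B)).PosSemidef)
    (X : Matrix (Fin n) (Fin n) ℂ)
    (hX : X.IsHermitian)
    (hRic : Complex.I • (X * A - Aᴴ * X) = Cᴴ * C + X * B * Bᴴ * X)
    (hspec : ∀ μ ∈ spectrum ℂ (A + Complex.I • (B * Bᴴ * X)), μ.im ≤ 0) :
    X.PosDef ↔ (∀ μ ∈ spectrum ℂ A, μ.im ≤ 0) := by
  constructor
  · -- X positive definite implies spectrum in closed lower half plane
    intro hPD μ hμ
    obtain ⟨v, hv, heig⟩ := mem_spectrum_iff_eig.1 hμ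
    have hq := quad_form hRic v
    rw [heig, mulVec_smul, dotProduct_smul, star_smul, smul_dotProduct] at hq
    set t := star v ⬝ᵥ (X *ᵥ v) with ht
    have hsval : Complex.I * (μ • t - star μ • t) = ((-2 * μ.im : ℝ) : ℂ) * t := by
      rw [smul_eq_mul, smul_eq_mul, Complex.star_def]
      calc Complex.I * (μ * t - (starRingEnd ℂ) μ * t)
          = Complex.I * (μ - (starRingEnd ℂ) μ) * t := by ring
        _ = Complex.I * ((2 * μ.im : ℝ) * Complex.I) * t := by rw [Complex.sub_conj]
        _ = ((-2 * μ.im : ℝ) : ℂ) * t := by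
            push_cast
            linear_combination (2 : ℂ) * μ.im * t * Complex.I_sq
    rw [hsval] at hq
    have hWpos : (0:ℂ) ≤ star v ⬝ᵥ ((Cᴴ * C + X * B * Bᴴ * X) *ᵥ v) := (W_posSemidef hX).dotProduct_mulVec_nonneg v
    rw [← hq] at hWpos
    have htpos : (0:ℂ) < t := hPD.dotProduct_mulVec_pos hv
    have htre : 0 < t.re := (Complex.lt_def.1 htpos).1
    have hre : 0 ≤ (-2 * μ.im) * t.re := by
      have := (Complex.le_def.1 hWpos).1
      rwa [Complex.zero_re, Complex.mul_re, Complex.ofReal_re, Complex.ofReal_im,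
        zero_mul, sub_zero] at this
    nlinarith
  · -- converse
    intro hA
    have hA' := spectrum_im_neg hX hRic hAC hA
    have hPSD := posSemidef_of_riccati hX hRic hA'
    refine PosDef.of_dotProduct_mulVec_pos hX fun v hv => ?_
    rcases (hPSD.dotProduct_mulVec_nonneg v).lt_or_eq with hlt | heq
    · exact hlt
    · exfalso
      have hXv : X *ᵥ v = 0 := (hPSD.dotProduct_mulVec_zero_iff v).1 heq.symm
      exact hv (X_inj hX hRic hAC hXv)
end

section
/- Let m = m₁ + m₂, let j be the m×m signature matrix j = diag(I_{m₁}, −I_{m₂}), let α be an n×n complex matrix, S an invertible Hermitian n×n matrix, and Λ an n×m complex matrix satisfying the identity αS − Sα* = iΛjΛ*. For every complex λ such that λIₙ − α and λ̄Iₙ − α* are invertible, the matrix W(λ) = I_m + i j Λ* S⁻¹ (λIₙ − α)⁻¹ Λ satisfies W(λ)* j W(λ) = j + i(λ̄ − λ) Λ* (λ̄Iₙ − α*)⁻¹ S⁻¹ (λIₙ − α)⁻¹ Λ. In particular, for every real λ with λIₙ − α invertible one has W(λ)* j W(λ) = j, i.e., W(λ) is j-unitary. -/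
open Matrix

/-- Identity (1.17)/(n1.1): if `αS - Sαᴴ = iΛjΛᴴ` with `S` invertible Hermitian and
`j = diag(I, -I)`, then `W(λ) = I + ijΛᴴS⁻¹(λI - α)⁻¹Λ` satisfies
`W(λ)ᴴ j W(λ) = j + i(λ̄ - λ) Λᴴ (λ̄I - αᴴ)⁻¹ S⁻¹ (λI - α)⁻¹ Λ`;
in particular `W(λ)ᴴ j W(λ) = j` for real `λ`. -/
theorem transfer_function_j_unitary_on_real_axis
    (n m₁ m₂ : ℕ)
    (α S : Matrix (Fin n) (Fin n) ℂ)
    (hS : S.IsHermitian) (hSinv : IsUnit S)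
    (Λ : Matrix (Fin n) (Fin m₁ ⊕ Fin m₂) ℂ)
    (j : Matrix (Fin m₁ ⊕ Fin m₂) (Fin m₁ ⊕ Fin m₂) ℂ)
    (hj : j = Matrix.fromBlocks 1 0 0 (-1))
    (hid : α * S - S * αᴴ = Complex.I • (Λ * j * Λᴴ)) :
    (∀ l : ℂ, IsUnit (l • (1 : Matrix (Fin n) (Fin n) ℂ) - α) →
      IsUnit ((starRingEnd ℂ l) • (1 : Matrix (Fin n) (Fin n) ℂ) - αᴴ) →
      (1 + Complex.I • (j * Λᴴ * S⁻¹ * (l • (1 : Matrix (Fin n) (Fin n) ℂ) - α)⁻¹ * Λ))ᴴ * j *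
        (1 + Complex.I • (j * Λᴴ * S⁻¹ * (l • (1 : Matrix (Fin n) (Fin n) ℂ) - α)⁻¹ * Λ)) =
      j + (Complex.I * (starRingEnd ℂ l - l)) •
        (Λᴴ * ((starRingEnd ℂ l) • (1 : Matrix (Fin n) (Fin n) ℂ) - αᴴ)⁻¹ * S⁻¹ *
          (l • (1 : Matrix (Fin n) (Fin n) ℂ) - α)⁻¹ * Λ)) ∧
    (∀ l : ℝ, IsUnit ((l : ℂ) • (1 : Matrix (Fin n) (Fin n) ℂ) - α) →
      (1 + Complex.I • (j * Λᴴ * S⁻¹ * ((l : ℂ) • (1 : Matrix (Fin n) (Fin n) ℂ) - α)⁻¹ * Λ))ᴴ * j *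
        (1 + Complex.I • (j * Λᴴ * S⁻¹ * ((l : ℂ) • (1 : Matrix (Fin n) (Fin n) ℂ) - α)⁻¹ * Λ)) =
      j) := by
  have hSd : IsUnit S.det := (Matrix.isUnit_iff_isUnit_det S).mp hSinv
  haveI : Invertible S := S.invertibleOfIsUnitDet hSd
  have hS1 : S * S⁻¹ = 1 := Matrix.mul_inv_of_invertible S
  have hS2 : S⁻¹ * S = 1 := Matrix.inv_mul_of_invertible S
  have hSiH : (S⁻¹)ᴴ = S⁻¹ := hS.inv
  have hjj : j * j = 1 := by
    rw [hj, Matrix.fromBlocks_multiply]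
    simp
  have hjH : jᴴ = j := by
    rw [hj, Matrix.fromBlocks_conjTranspose]
    simp
  have hK : Λ * j * Λᴴ = (-Complex.I) • (α * S - S * αᴴ) := by
    rw [hid, smul_smul]
    simp
  have main : ∀ l : ℂ, IsUnit (l • (1 : Matrix (Fin n) (Fin n) ℂ) - α) →
      IsUnit ((starRingEnd ℂ l) • (1 : Matrix (Fin n) (Fin n) ℂ) - αᴴ) →
      (1 + Complex.I • (j * Λᴴ * S⁻¹ * (l • (1 : Matrix (Fin n) (Fin n) ℂ) - α)⁻¹ * Λ))ᴴ * j *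
        (1 + Complex.I • (j * Λᴴ * S⁻¹ * (l • (1 : Matrix (Fin n) (Fin n) ℂ) - α)⁻¹ * Λ)) =
      j + (Complex.I * (starRingEnd ℂ l - l)) •
        (Λᴴ * ((starRingEnd ℂ l) • (1 : Matrix (Fin n) (Fin n) ℂ) - αᴴ)⁻¹ * S⁻¹ *
          (l • (1 : Matrix (Fin n) (Fin n) ℂ) - α)⁻¹ * Λ) := by
    intro l hA hB
    haveI : Invertible (l • (1 : Matrix (Fin n) (Fin n) ℂ) - α) :=
      (l • (1 : Matrix (Fin n) (Fin n) ℂ) - α).invertibleOfIsUnitDet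
        ((Matrix.isUnit_iff_isUnit_det _).mp hA)
    haveI : Invertible ((starRingEnd ℂ l) • (1 : Matrix (Fin n) (Fin n) ℂ) - αᴴ) :=
      ((starRingEnd ℂ l) • (1 : Matrix (Fin n) (Fin n) ℂ) - αᴴ).invertibleOfIsUnitDet
        ((Matrix.isUnit_iff_isUnit_det _).mp hB)
    set A := l • (1 : Matrix (Fin n) (Fin n) ℂ) - α with hAdef
    set B := (starRingEnd ℂ l) • (1 : Matrix (Fin n) (Fin n) ℂ) - αᴴ with hBdef
    have hA1 : A * A⁻¹ = 1 := Matrix.mul_inv_of_invertible A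
    have hA2 : A⁻¹ * A = 1 := Matrix.inv_mul_of_invertible A
    have hB1 : B * B⁻¹ = 1 := Matrix.mul_inv_of_invertible B
    have hB2 : B⁻¹ * B = 1 := Matrix.inv_mul_of_invertible B
    have hAH : Aᴴ = B := by
      rw [hAdef, hBdef]
      simp
    have hAiH : (A⁻¹)ᴴ = B⁻¹ := by rw [Matrix.conjTranspose_nonsing_inv, hAH]
    have hα : α = l • 1 - A := by rw [hAdef]; simp
    have hαH : αᴴ = (starRingEnd ℂ l) • 1 - B := by rw [hBdef]; simp
    have key : B⁻¹ * S⁻¹ * (Λ * j * Λᴴ) * (S⁻¹ * A⁻¹) =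
        (Complex.I * (starRingEnd ℂ l - l)) • (B⁻¹ * S⁻¹ * A⁻¹)
          + Complex.I • (B⁻¹ * S⁻¹) - Complex.I • (S⁻¹ * A⁻¹) := by
      rw [hK]
      nth_rewrite 1 [hα]
      nth_rewrite 1 [hαH]
      simp only [Matrix.sub_mul, Matrix.mul_sub, Matrix.smul_mul, Matrix.mul_smul,
        smul_sub, Matrix.mul_one, Matrix.one_mul, Matrix.mul_assoc,
        Matrix.mul_inv_cancel_left_of_invertible, Matrix.inv_mul_cancel_left_of_invertible,
        hA1, hA2, hB1, hB2, hS1, hS2]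
      module
    have hWH : (1 + Complex.I • (j * Λᴴ * S⁻¹ * A⁻¹ * Λ))ᴴ =
        1 + (-Complex.I) • (Λᴴ * (B⁻¹ * (S⁻¹ * (Λ * j)))) := by
      simp [Matrix.conjTranspose_mul, hAiH, hSiH, hjH, Matrix.mul_assoc]
    rw [hWH]
    have expand :
        (1 + (-Complex.I) • (Λᴴ * (B⁻¹ * (S⁻¹ * (Λ * j))))) * j *
          (1 + Complex.I • (j * Λᴴ * S⁻¹ * A⁻¹ * Λ)) =
        j + Complex.I • ((j * j) * (Λᴴ * (S⁻¹ * (A⁻¹ * Λ))))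
          - Complex.I • (Λᴴ * (B⁻¹ * (S⁻¹ * (Λ * (j * j)))))
          + (-Complex.I * Complex.I) •
              (Λᴴ * (B⁻¹ * (S⁻¹ * (Λ * ((j * (j * j)) * (Λᴴ * (S⁻¹ * (A⁻¹ * Λ)))))))) := by
      simp only [Matrix.add_mul, Matrix.mul_add, Matrix.smul_mul, Matrix.mul_smul,
        Matrix.one_mul, Matrix.mul_one, smul_smul, Matrix.mul_assoc]
      module
    rw [expand, hjj]
    simp only [Matrix.one_mul, Matrix.mul_one, neg_mul, Complex.I_mul_I, neg_neg, one_smul]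
    have step2 : Λᴴ * (B⁻¹ * (S⁻¹ * (Λ * (j * (Λᴴ * (S⁻¹ * (A⁻¹ * Λ))))))) =
        Λᴴ * ((B⁻¹ * S⁻¹ * (Λ * j * Λᴴ) * (S⁻¹ * A⁻¹)) * Λ) := by
      simp only [Matrix.mul_assoc]
    simp only [Matrix.mul_one, Matrix.one_mul, step2, key]
    simp only [Matrix.add_mul, Matrix.sub_mul, Matrix.mul_add, Matrix.mul_sub,
      Matrix.smul_mul, Matrix.mul_smul, Matrix.mul_assoc]
    module
  refine ⟨main, fun l hA => ?_⟩
  have hB : IsUnit ((starRingEnd ℂ (l : ℂ)) • (1 : Matrix (Fin n) (Fin n) ℂ) - αᴴ) := by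
    have h1 : ((starRingEnd ℂ (l : ℂ)) • (1 : Matrix (Fin n) (Fin n) ℂ) - αᴴ) =
        ((l : ℂ) • (1 : Matrix (Fin n) (Fin n) ℂ) - α)ᴴ := by
      simp [Complex.conj_ofReal]
    rw [h1, Matrix.isUnit_iff_isUnit_det, Matrix.det_conjTranspose]
    exact ((Matrix.isUnit_iff_isUnit_det _).mp hA).star
  have h := main (l : ℂ) hA hB
  rw [h]
  simp [Complex.conj_ofReal]
end

section
/- Let m = m₁ + m₂, let j be the m×m signature matrix j = diag(I_{m₁}, −I_{m₂}), let α be an n×n complex matrix, S₀ an invertible Hermitian n×n matrix, γ₁ an n×m₁ matrix, γ an n×m₂ matrix, and Λ₀ = [γ₁ γ] (the n×m matrix with block columns γ₁ and γ), satisfying αS₀ − S₀α* = i(γ₁γ₁* − γγ*). For real λ with λIₙ − α invertible, let W₁₁(λ) = I_{m₁} + iγ₁*S₀⁻¹(λIₙ − α)⁻¹γ₁ and W₂₁(λ) = −iγ*S₀⁻¹(λIₙ − α)⁻¹γ₁ (the left blocks of W(λ) = I_m + i j Λ₀* S₀⁻¹ (λIₙ − α)⁻¹ Λ₀). Then W₁₁(λ)*W₁₁(λ)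 − W₂₁(λ)*W₂₁(λ) = I_{m₁}; consequently, if W₁₁(λ) is invertible, then R(λ) = W₂₁(λ)W₁₁(λ)⁻¹ satisfies R(λ)*R(λ) ≤ I_{m₁}. -/
set_option maxHeartbeats 2000000

open Matrix
open scoped ComplexOrder

/-- Identity (n1.2)/(0.3): for the left blocks of
`W(λ) = I + ijΛ₀ᴴS₀⁻¹(λI - α)⁻¹Λ₀` with `αS₀ - S₀αᴴ = i(γ₁γ₁ᴴ - γγᴴ)` and real `λ`,
one has `W₁₁(λ)ᴴW₁₁(λ) - W₂₁(λ)ᴴW₂₁(λ) = I`; hence `R = W₂₁W₁₁⁻¹` is contractive. -/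
theorem blocks_identity_and_contractive_on_real_axis
    (n m₁ m₂ : ℕ)
    (α S₀ : Matrix (Fin n) (Fin n) ℂ)
    (hS₀ : S₀.IsHermitian) (hS₀inv : IsUnit S₀)
    (γ₁ : Matrix (Fin n) (Fin m₁) ℂ) (γ : Matrix (Fin n) (Fin m₂) ℂ)
    (hid : α * S₀ - S₀ * αᴴ = Complex.I • (γ₁ * γ₁ᴴ - γ * γᴴ))
    (l : ℝ) (hinv : IsUnit ((l : ℂ) • (1 : Matrix (Fin n) (Fin n) ℂ) - α))
    (W₁₁ : Matrix (Fin m₁) (Fin m₁) ℂ) (W₂₁ : Matrix (Fin m₂) (Fin m₁) ℂ)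
    (hW₁₁ : W₁₁ = 1 + Complex.I •
      (γ₁ᴴ * S₀⁻¹ * ((l : ℂ) • (1 : Matrix (Fin n) (Fin n) ℂ) - α)⁻¹ * γ₁))
    (hW₂₁ : W₂₁ = -(Complex.I •
      (γᴴ * S₀⁻¹ * ((l : ℂ) • (1 : Matrix (Fin n) (Fin n) ℂ) - α)⁻¹ * γ₁))) :
    W₁₁ᴴ * W₁₁ - W₂₁ᴴ * W₂₁ = 1 ∧
    (IsUnit W₁₁ →
      ((1 : Matrix (Fin m₁) (Fin m₁) ℂ) -
        (W₂₁ * W₁₁⁻¹)ᴴ * (W₂₁ * W₁₁⁻¹)).PosSemidef) := by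
  set M : Matrix (Fin n) (Fin n) ℂ := (l : ℂ) • 1 - α with hM
  have hdetS : IsUnit S₀.det := (Matrix.isUnit_iff_isUnit_det _).mp hS₀inv
  have hdetM : IsUnit M.det := (Matrix.isUnit_iff_isUnit_det _).mp hinv
  have f1 : S₀⁻¹ * S₀ = 1 := Matrix.nonsing_inv_mul _ hdetS
  have f2 : S₀ * S₀⁻¹ = 1 := Matrix.mul_nonsing_inv _ hdetS
  have f3 : M⁻¹ * M = 1 := Matrix.nonsing_inv_mul _ hdetM
  have f4 : M * M⁻¹ = 1 := Matrix.mul_nonsing_inv _ hdetM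
  have hSh : S₀⁻¹ᴴ = S₀⁻¹ := hS₀.inv
  have hMh : Mᴴ = (l : ℂ) • 1 - αᴴ := by
    simp [hM, conjTranspose_smul, Complex.star_def, Complex.conj_ofReal]
  have f6 : (M⁻¹)ᴴ * Mᴴ = 1 := by
    rw [← conjTranspose_mul, f4, conjTranspose_one]
  have hα : α = (l : ℂ) • 1 - M := by simp [hM]
  have hαh : αᴴ = (l : ℂ) • 1 - Mᴴ := by rw [hMh]; abel
  set Z : Matrix (Fin n) (Fin n) ℂ := S₀⁻¹ * M⁻¹ with hZ
  have hZh : Zᴴ = (M⁻¹)ᴴ * S₀⁻¹ := by rw [hZ, conjTranspose_mul, hSh]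
  -- core identity
  have hcore : Zᴴ * (α * S₀ - S₀ * αᴴ) * Z = Z - Zᴴ := by
    rw [hZh, hZ]
    nth_rewrite 1 [hα]
    rw [hαh]
    have e1 : (M⁻¹)ᴴ * S₀⁻¹ * (((l : ℂ) • 1 - M) * S₀ - S₀ * ((l : ℂ) • 1 - Mᴴ))
        * (S₀⁻¹ * M⁻¹)
        = (M⁻¹)ᴴ * ((S₀⁻¹ * S₀) * (Mᴴ * (S₀⁻¹ * M⁻¹)))
          - (M⁻¹)ᴴ * (S₀⁻¹ * (M * ((S₀ * S₀⁻¹) * M⁻¹))) := by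
      noncomm_ring
    rw [e1, f1, f2]
    simp only [Matrix.one_mul, Matrix.mul_one]
    rw [← mul_assoc ((M⁻¹)ᴴ) Mᴴ, f6, Matrix.one_mul, f4, Matrix.mul_one]
  have hD : γ₁ * γ₁ᴴ - γ * γᴴ = (-Complex.I) • (α * S₀ - S₀ * αᴴ) := by
    rw [hid, smul_smul]
    simp [Complex.I_mul_I]
  have hkey : Complex.I • (Z - Zᴴ) + Zᴴ * (γ₁ * γ₁ᴴ - γ * γᴴ) * Z = 0 := by
    rw [hD]
    have e2 : Zᴴ * ((-Complex.I) • (α * S₀ - S₀ * αᴴ)) * Z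
        = (-Complex.I) • (Zᴴ * (α * S₀ - S₀ * αᴴ) * Z) := by
      rw [Matrix.mul_smul, Matrix.smul_mul]
    rw [e2, hcore]
    module
  have hIdent : W₁₁ᴴ * W₁₁ - W₂₁ᴴ * W₂₁ = 1 := by
    have hmain : W₁₁ᴴ * W₁₁ - W₂₁ᴴ * W₂₁
        = 1 + γ₁ᴴ * (Complex.I • (Z - Zᴴ) + Zᴴ * (γ₁ * γ₁ᴴ - γ * γᴴ) * Z) * γ₁ := by
      rw [hW₁₁, hW₂₁]
      simp only [conjTranspose_add, conjTranspose_one, conjTranspose_neg,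
        conjTranspose_smul, conjTranspose_mul, conjTranspose_conjTranspose,
        Complex.star_def, Complex.conj_I, hSh, hZh, hZ]
      simp only [sub_eq_add_neg, Matrix.add_mul, Matrix.mul_add,
        Matrix.smul_mul, Matrix.mul_smul, Matrix.neg_mul, Matrix.mul_neg,
        smul_add, smul_neg, neg_add, neg_neg, smul_smul,
        Matrix.one_mul, Matrix.mul_one, mul_assoc, Matrix.mul_assoc,
        neg_mul, mul_neg, Complex.I_mul_I, neg_smul, one_smul]
      abel
    rw [hmain, hkey]
    simp
  refine ⟨hIdent, fun hU => ?_⟩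
  have hdW : IsUnit W₁₁.det := (Matrix.isUnit_iff_isUnit_det _).mp hU
  have g1 : W₁₁ * W₁₁⁻¹ = 1 := Matrix.mul_nonsing_inv _ hdW
  have hrw : (1 : Matrix (Fin m₁) (Fin m₁) ℂ) -
      (W₂₁ * W₁₁⁻¹)ᴴ * (W₂₁ * W₁₁⁻¹) = (W₁₁⁻¹)ᴴ * W₁₁⁻¹ := by
    calc (1 : Matrix (Fin m₁) (Fin m₁) ℂ) - (W₂₁ * W₁₁⁻¹)ᴴ * (W₂₁ * W₁₁⁻¹)
        = (W₁₁ * W₁₁⁻¹)ᴴ * (W₁₁ * W₁₁⁻¹) - (W₂₁ * W₁₁⁻¹)ᴴ * (W₂₁ * W₁₁⁻¹) := by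
          rw [g1]; simp
      _ = (W₁₁⁻¹)ᴴ * (W₁₁ᴴ * W₁₁ - W₂₁ᴴ * W₂₁) * W₁₁⁻¹ := by
          simp only [conjTranspose_mul, Matrix.mul_sub, Matrix.sub_mul, mul_assoc, Matrix.mul_assoc]
      _ = (W₁₁⁻¹)ᴴ * W₁₁⁻¹ := by rw [hIdent, Matrix.mul_one]
  rw [hrw]
  exact Matrix.posSemidef_conjTranspose_mul_self _
end

section
/- Let m = m₁ + m₂, let j be the m×m signature matrix j = diag(I_{m₁}, −I_{m₂}), let α be an n×n complex matrix, S an invertible Hermitian n×n matrix, and Λ an n×m complex matrix satisfying αS − Sα* = iΛjΛ*. For every complex λ such that λIₙ − α and λIₙ − α* are invertible, the matrix W(λ) = I_m + i j Λ* S⁻¹ (λIₙ − α)⁻¹ Λ is invertible with inverse W(λ)⁻¹ = I_m − i j Λ* (λIₙ − α*)⁻¹ S⁻¹ Λ; that is, (I_m + i j Λ* S⁻¹ (λIₙ − α)⁻¹ Λ)(I_m − i j Λ* (λIₙ − α*)⁻¹ S⁻¹ Λ) = I_m and the product in the reverse order also equals I_m. -/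
open Matrix

/-- Formula (2.5): if `αS - Sαᴴ = iΛjΛᴴ` with `S` invertible Hermitian, then
`W(λ) = I + ijΛᴴS⁻¹(λI - α)⁻¹Λ` is invertible with inverse
`I - ijΛᴴ(λI - αᴴ)⁻¹S⁻¹Λ` (both products equal the identity). -/
theorem transfer_function_inverse_formula
    (n m₁ m₂ : ℕ)
    (α S : Matrix (Fin n) (Fin n) ℂ)
    (hS : S.IsHermitian) (hSinv : IsUnit S)
    (Λ : Matrix (Fin n) (Fin m₁ ⊕ Fin m₂) ℂ)
    (j : Matrix (Fin m₁ ⊕ Fin m₂) (Fin m₁ ⊕ Fin m₂) ℂ)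
    (hj : j = Matrix.fromBlocks 1 0 0 (-1))
    (hid : α * S - S * αᴴ = Complex.I • (Λ * j * Λᴴ))
    (l : ℂ)
    (h₁ : IsUnit (l • (1 : Matrix (Fin n) (Fin n) ℂ) - α))
    (h₂ : IsUnit (l • (1 : Matrix (Fin n) (Fin n) ℂ) - αᴴ)) :
    (1 + Complex.I • (j * Λᴴ * S⁻¹ * (l • (1 : Matrix (Fin n) (Fin n) ℂ) - α)⁻¹ * Λ)) *
      (1 - Complex.I • (j * Λᴴ * (l • (1 : Matrix (Fin n) (Fin n) ℂ) - αᴴ)⁻¹ * S⁻¹ * Λ)) = 1 ∧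
    (1 - Complex.I • (j * Λᴴ * (l • (1 : Matrix (Fin n) (Fin n) ℂ) - αᴴ)⁻¹ * S⁻¹ * Λ)) *
      (1 + Complex.I • (j * Λᴴ * S⁻¹ * (l • (1 : Matrix (Fin n) (Fin n) ℂ) - α)⁻¹ * Λ)) = 1 := by
  set e1 : Matrix (Fin n) (Fin n) ℂ := l • (1 : Matrix (Fin n) (Fin n) ℂ) - α with he1
  set e2 : Matrix (Fin n) (Fin n) ℂ := l • (1 : Matrix (Fin n) (Fin n) ℂ) - αᴴ with he2
  have hd1 : IsUnit e1.det := (Matrix.isUnit_iff_isUnit_det _).mp h₁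
  have hd2 : IsUnit e2.det := (Matrix.isUnit_iff_isUnit_det _).mp h₂
  have hdS : IsUnit S.det := (Matrix.isUnit_iff_isUnit_det _).mp hSinv
  have hA1 : e1 * e1⁻¹ = 1 := Matrix.mul_nonsing_inv _ hd1
  have hA2 : e1⁻¹ * e1 = 1 := Matrix.nonsing_inv_mul _ hd1
  have hB1 : e2 * e2⁻¹ = 1 := Matrix.mul_nonsing_inv _ hd2
  have hB2 : e2⁻¹ * e2 = 1 := Matrix.nonsing_inv_mul _ hd2
  have hS1 : S * S⁻¹ = 1 := Matrix.mul_nonsing_inv _ hdS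
  have hS2 : S⁻¹ * S = 1 := Matrix.nonsing_inv_mul _ hdS
  -- cancellation helpers (column type fixed to the one that occurs)
  have c : ∀ (P Q : Matrix (Fin n) (Fin n) ℂ), P * Q = 1 →
      ∀ M : Matrix (Fin n) (Fin m₁ ⊕ Fin m₂) ℂ, P * (Q * M) = M := by
    intro P Q hPQ M
    rw [← Matrix.mul_assoc, hPQ, Matrix.one_mul]
  -- key identity
  have key : Λ * j * Λᴴ = Complex.I • (e1 * S - S * e2) := by
    have h0 : e1 * S - S * e2 = -(α * S - S * αᴴ) := by
      rw [he1, he2]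
      rw [Matrix.sub_mul, Matrix.mul_sub, Matrix.smul_mul, Matrix.mul_smul,
        Matrix.one_mul, Matrix.mul_one]
      abel
    rw [h0, hid, smul_neg, smul_smul, Complex.I_mul_I, neg_smul, one_smul, neg_neg]
  set X : Matrix (Fin m₁ ⊕ Fin m₂) (Fin m₁ ⊕ Fin m₂) ℂ := j * Λᴴ * S⁻¹ * e1⁻¹ * Λ with hX
  set Y : Matrix (Fin m₁ ⊕ Fin m₂) (Fin m₁ ⊕ Fin m₂) ℂ := j * Λᴴ * e2⁻¹ * S⁻¹ * Λ with hY
  have hXY : X * Y = Complex.I • Y - Complex.I • X := by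
    have h : X * Y = j * Λᴴ * S⁻¹ * e1⁻¹ * (Λ * j * Λᴴ) * (e2⁻¹ * (S⁻¹ * Λ)) := by
      rw [hX, hY]; simp only [Matrix.mul_assoc]
    have t1 : j * Λᴴ * S⁻¹ * e1⁻¹ * (e1 * S) * (e2⁻¹ * (S⁻¹ * Λ)) = Y := by
      rw [hY]; simp only [Matrix.mul_assoc]
      rw [c _ _ hA2, c _ _ hS2]
    have t2 : j * Λᴴ * S⁻¹ * e1⁻¹ * (S * e2) * (e2⁻¹ * (S⁻¹ * Λ)) = X := by
      rw [hX]; simp only [Matrix.mul_assoc]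
      rw [c _ _ hB1, c _ _ hS1]
    rw [h, key, Matrix.mul_smul, Matrix.smul_mul, Matrix.mul_sub, Matrix.sub_mul,
      t1, t2, smul_sub]
  have hYX : Y * X = Complex.I • Y - Complex.I • X := by
    have h : Y * X = j * Λᴴ * e2⁻¹ * S⁻¹ * (Λ * j * Λᴴ) * (S⁻¹ * (e1⁻¹ * Λ)) := by
      rw [hX, hY]; simp only [Matrix.mul_assoc]
    have t1 : j * Λᴴ * e2⁻¹ * S⁻¹ * (e1 * S) * (S⁻¹ * (e1⁻¹ * Λ)) = Y := by
      rw [hY]; simp only [Matrix.mul_assoc]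
      rw [c _ _ hS1, c _ _ hA1]
    have t2 : j * Λᴴ * e2⁻¹ * S⁻¹ * (S * e2) * (S⁻¹ * (e1⁻¹ * Λ)) = X := by
      rw [hX]; simp only [Matrix.mul_assoc]
      rw [c _ _ hS2, c _ _ hB2]
    rw [h, key, Matrix.mul_smul, Matrix.smul_mul, Matrix.mul_sub, Matrix.sub_mul,
      t1, t2, smul_sub]
  have sq : ∀ U V : Matrix (Fin m₁ ⊕ Fin m₂) (Fin m₁ ⊕ Fin m₂) ℂ,
      (Complex.I • U) * (Complex.I • V) = -(U * V) := by
    intro U V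
    rw [Matrix.smul_mul, Matrix.mul_smul, smul_smul, Complex.I_mul_I, neg_smul, one_smul]
  constructor
  · calc (1 + Complex.I • X) * (1 - Complex.I • Y)
        = 1 + Complex.I • X - (Complex.I • Y + (Complex.I • X) * (Complex.I • Y)) := by
          rw [mul_sub, mul_one, add_mul, one_mul]
      _ = 1 := by rw [sq, hXY]; abel
  · calc (1 - Complex.I • Y) * (1 + Complex.I • X)
        = 1 + Complex.I • X - (Complex.I • Y + (Complex.I • Y) * (Complex.I • X)) := by
          rw [sub_mul, one_mul, mul_add, mul_one]
      _ = 1 := by rw [sq, hYX]; abel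
end

section
/- Let α be an n×n complex matrix, S₀ an invertible n×n complex matrix, γ₁ an n×m₁ complex matrix, γ an n×m₂ complex matrix, and set θ = α − iγ₁γ₁*S₀⁻¹. For every complex λ such that λIₙ − α and λIₙ − θ are invertible, one has (−iγ*S₀⁻¹(λIₙ − α)⁻¹γ₁) · (I_{m₁} − iγ₁*S₀⁻¹(λIₙ − θ)⁻¹γ₁) = −iγ*S₀⁻¹(λIₙ − θ)⁻¹γ₁; i.e., with W₁₁(λ) = I_{m₁} + iγ₁*S₀⁻¹(λIₙ − α)⁻¹γ₁ and W₂₁(λ) = −iγ*S₀⁻¹(λIₙ − α)⁻¹γ₁, one has W₂₁(λ)W₁₁(λ)⁻¹ = −iγ*S₀⁻¹(λIₙ − θ)⁻¹γ₁. -/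
open Matrix

/-- Identity (n1.3)/(2.9): with `θ = α - iγ₁γ₁ᴴS₀⁻¹`,
`W₂₁(λ) W₁₁(λ)⁻¹ = -iγᴴS₀⁻¹(λI - θ)⁻¹γ₁`, where
`W₁₁(λ)⁻¹ = I - iγ₁ᴴS₀⁻¹(λI - θ)⁻¹γ₁` and `W₂₁(λ) = -iγᴴS₀⁻¹(λI - α)⁻¹γ₁`. -/
theorem reflection_coefficient_formula
    (n m₁ m₂ : ℕ)
    (α S₀ : Matrix (Fin n) (Fin n) ℂ) (hS₀inv : IsUnit S₀)
    (γ₁ : Matrix (Fin n) (Fin m₁) ℂ) (γ : Matrix (Fin n) (Fin m₂) ℂ)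
    (θ : Matrix (Fin n) (Fin n) ℂ)
    (hθ : θ = α - Complex.I • (γ₁ * γ₁ᴴ * S₀⁻¹))
    (l : ℂ)
    (hα : IsUnit (l • (1 : Matrix (Fin n) (Fin n) ℂ) - α))
    (hθinv : IsUnit (l • (1 : Matrix (Fin n) (Fin n) ℂ) - θ)) :
    (-(Complex.I • (γᴴ * S₀⁻¹ * (l • (1 : Matrix (Fin n) (Fin n) ℂ) - α)⁻¹ * γ₁))) *
      (1 - Complex.I • (γ₁ᴴ * S₀⁻¹ * (l • (1 : Matrix (Fin n) (Fin n) ℂ) - θ)⁻¹ * γ₁)) =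
    -(Complex.I • (γᴴ * S₀⁻¹ * (l • (1 : Matrix (Fin n) (Fin n) ℂ) - θ)⁻¹ * γ₁)) ∧
    (-(Complex.I • (γᴴ * S₀⁻¹ * (l • (1 : Matrix (Fin n) (Fin n) ℂ) - α)⁻¹ * γ₁))) *
      (1 + Complex.I • (γ₁ᴴ * S₀⁻¹ * (l • (1 : Matrix (Fin n) (Fin n) ℂ) - α)⁻¹ * γ₁))⁻¹ =
    -(Complex.I • (γᴴ * S₀⁻¹ * (l • (1 : Matrix (Fin n) (Fin n) ℂ) - θ)⁻¹ * γ₁)) := by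

  set A := l • (1 : Matrix (Fin n) (Fin n) ℂ) - α with hAdef
  set T := l • (1 : Matrix (Fin n) (Fin n) ℂ) - θ with hTdef
  have hdetA : IsUnit A.det := (Matrix.isUnit_iff_isUnit_det _).mp hα
  have hdetT : IsUnit T.det := (Matrix.isUnit_iff_isUnit_det _).mp hθinv
  have hA2 : A⁻¹ * A = 1 := Matrix.nonsing_inv_mul _ hdetA
  have hT1 : T * T⁻¹ = 1 := Matrix.mul_nonsing_inv _ hdetT
  have hXA : Complex.I • (γ₁ * γ₁ᴴ * S₀⁻¹) = T - A := by
    rw [hTdef, hAdef, hθ]; abel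
  have key : A⁻¹ * γ₁ * (1 - Complex.I • (γ₁ᴴ * S₀⁻¹ * T⁻¹ * γ₁)) = T⁻¹ * γ₁ := by
    have expand : A⁻¹ * γ₁ * (1 - Complex.I • (γ₁ᴴ * S₀⁻¹ * T⁻¹ * γ₁))
        = A⁻¹ * γ₁ - A⁻¹ * (Complex.I • (γ₁ * γ₁ᴴ * S₀⁻¹)) * (T⁻¹ * γ₁) := by
      simp [Matrix.mul_sub, mul_smul_comm, smul_mul_assoc, Matrix.mul_assoc]
    rw [expand, hXA]
    have h2 : A⁻¹ * (T - A) * (T⁻¹ * γ₁) = A⁻¹ * γ₁ - T⁻¹ * γ₁ := by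
      rw [Matrix.mul_sub, Matrix.sub_mul]
      rw [Matrix.mul_assoc A⁻¹ T, ← Matrix.mul_assoc T T⁻¹, hT1, Matrix.one_mul,
        hA2, Matrix.one_mul]
    rw [h2]; abel
  have first : (-(Complex.I • (γᴴ * S₀⁻¹ * A⁻¹ * γ₁))) *
      (1 - Complex.I • (γ₁ᴴ * S₀⁻¹ * T⁻¹ * γ₁)) =
      -(Complex.I • (γᴴ * S₀⁻¹ * T⁻¹ * γ₁)) := by
    have h := congrArg (fun M => -(Complex.I • (γᴴ * S₀⁻¹ * M))) key
    simpa [Matrix.mul_assoc, smul_mul_assoc, neg_mul] using h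
  refine ⟨first, ?_⟩
  have hXY : (Complex.I • (γ₁ᴴ * S₀⁻¹ * A⁻¹ * γ₁)) *
      (1 - Complex.I • (γ₁ᴴ * S₀⁻¹ * T⁻¹ * γ₁)) =
      Complex.I • (γ₁ᴴ * S₀⁻¹ * T⁻¹ * γ₁) := by
    have h := congrArg (fun M => Complex.I • (γ₁ᴴ * S₀⁻¹ * M)) key
    simpa [Matrix.mul_assoc, smul_mul_assoc] using h
  have hW : (1 + Complex.I • (γ₁ᴴ * S₀⁻¹ * A⁻¹ * γ₁)) *
      (1 - Complex.I • (γ₁ᴴ * S₀⁻¹ * T⁻¹ * γ₁)) = 1 := by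
    rw [add_mul, one_mul, hXY]; abel
  have hWinv : (1 + Complex.I • (γ₁ᴴ * S₀⁻¹ * A⁻¹ * γ₁))⁻¹ =
      1 - Complex.I • (γ₁ᴴ * S₀⁻¹ * T⁻¹ * γ₁) := Matrix.inv_eq_right_inv hW
  rw [hWinv]; exact first
end

section
/- Let n, m₁, m₂ be positive integers, m = m₁ + m₂, and let j = diag(I_{m₁}, −I_{m₂}). Let A, B, C be complex matrices of sizes n×n, n×m₁, m₂×n such that the pair (A,B) is full range, the pair (A*,C*) is full range, and for every real λ with λIₙ − A invertible the matrix R(λ) = C(λIₙ − A)⁻¹B satisfies R(λ)*R(λ) ≤ I_{m₁}. Let X be the Hermitian invertible matrix satisfying i(XA − A*X) = C*C + XBB*X with every eigenvalue of A + iBB*X of nonpositive imaginary part, and define α = A + iBB*X, S₀ = X⁻¹, γ₁ = B, γ = −iS₀C*, Λ₀ = [γ₁ γ], and W(λ) = I_m + i j Λ₀* S₀⁻¹ (λIₙ − α)⁻¹ Λ₀. Then: (a) αS₀ − S₀α* = i(γ₁γ₁* − γγ*); (b) for every real λ with λIₙ − α invertible, W(λ)* j W(λ) = j; (c) every eigenvalue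 of α has nonpositive imaginary part; (d) for every complex λ such that λIₙ − α and λIₙ − A are invertible, the block W₁₁(λ) = I_{m₁} + iγ₁*S₀⁻¹(λIₙ − α)⁻¹γ₁ is invertible and W₂₁(λ)W₁₁(λ)⁻¹ = C(λIₙ − A)⁻¹B, where W₂₁(λ) = −iγ*S₀⁻¹(λIₙ − α)⁻¹γ₁. -/
open Matrix
open scoped ComplexOrder

open Matrix

/-- j-unitarity on the real line, abstract form. -/
private lemma aux_b {n : ℕ} {m : Type} [Fintype m] [DecidableEq m]
    (α S : Matrix (Fin n) (Fin n) ℂ) (Λ : Matrix (Fin n) m ℂ)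
    (j : Matrix m m ℂ) (hSH : Sᴴ = S) (hSu : IsUnit S)
    (hjH : jᴴ = j) (hj2 : j * j = 1)
    (hid : α * S - S * αᴴ = Complex.I • (Λ * j * Λᴴ))
    (l : ℝ) (hl : IsUnit ((l : ℂ) • (1 : Matrix (Fin n) (Fin n) ℂ) - α)) :
    (1 + Complex.I • (j * Λᴴ * S⁻¹ * ((l : ℂ) • (1 : Matrix (Fin n) (Fin n) ℂ) - α)⁻¹ * Λ))ᴴ * j *
      (1 + Complex.I • (j * Λᴴ * S⁻¹ * ((l : ℂ) • (1 : Matrix (Fin n) (Fin n) ℂ) - α)⁻¹ * Λ)) =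
      j := by
  set P : Matrix (Fin n) (Fin n) ℂ := (l : ℂ) • (1 : Matrix (Fin n) (Fin n) ℂ) - α with hPdef
  set Q : Matrix (Fin n) (Fin n) ℂ := (l : ℂ) • (1 : Matrix (Fin n) (Fin n) ℂ) - αᴴ with hQdef
  have hPd : IsUnit P.det := (Matrix.isUnit_iff_isUnit_det P).mp hl
  have hPH : Pᴴ = Q := by
    rw [hPdef, hQdef]
    simp [conjTranspose_sub, conjTranspose_smul, Complex.star_def, Complex.conj_ofReal]
  have hQd : IsUnit Q.det := by
    rw [← hPH, Matrix.det_conjTranspose]; exact hPd.star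
  have hSd : IsUnit S.det := (Matrix.isUnit_iff_isUnit_det S).mp hSu
  have hSiH : (S⁻¹)ᴴ = S⁻¹ := by rw [Matrix.conjTranspose_nonsing_inv, hSH]
  have hPiH : (P⁻¹)ᴴ = Q⁻¹ := by rw [Matrix.conjTranspose_nonsing_inv, hPH]
  have hjj : ∀ {k : Type} (t : Matrix m k ℂ), j * (j * t) = t := fun t => by
    rw [← Matrix.mul_assoc, hj2, Matrix.one_mul]
  have hPP : ∀ {k : Type} (t : Matrix (Fin n) k ℂ), P * (P⁻¹ * t) = t := fun t => by
    rw [← Matrix.mul_assoc, Matrix.mul_nonsing_inv _ hPd, Matrix.one_mul]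
  have hPiP : ∀ {k : Type} (t : Matrix (Fin n) k ℂ), P⁻¹ * (P * t) = t := fun t => by
    rw [← Matrix.mul_assoc, Matrix.nonsing_inv_mul _ hPd, Matrix.one_mul]
  have hQQ : ∀ {k : Type} (t : Matrix (Fin n) k ℂ), Q * (Q⁻¹ * t) = t := fun t => by
    rw [← Matrix.mul_assoc, Matrix.mul_nonsing_inv _ hQd, Matrix.one_mul]
  have hQiQ : ∀ {k : Type} (t : Matrix (Fin n) k ℂ), Q⁻¹ * (Q * t) = t := fun t => by
    rw [← Matrix.mul_assoc, Matrix.nonsing_inv_mul _ hQd, Matrix.one_mul]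
  have hSS : ∀ {k : Type} (t : Matrix (Fin n) k ℂ), S * (S⁻¹ * t) = t := fun t => by
    rw [← Matrix.mul_assoc, Matrix.mul_nonsing_inv _ hSd, Matrix.one_mul]
  have hSiS : ∀ {k : Type} (t : Matrix (Fin n) k ℂ), S⁻¹ * (S * t) = t := fun t => by
    rw [← Matrix.mul_assoc, Matrix.nonsing_inv_mul _ hSd, Matrix.one_mul]
  have hαe : ∀ {k : Type} (t : Matrix (Fin n) k ℂ), α * t = (l : ℂ) • t - P * t := by
    intro k t
    rw [hPdef, Matrix.sub_mul, Matrix.smul_mul, Matrix.one_mul, sub_sub_cancel]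
  have hαHe : ∀ {k : Type} (t : Matrix (Fin n) k ℂ), αᴴ * t = (l : ℂ) • t - Q * t := by
    intro k t
    rw [hQdef, Matrix.sub_mul, Matrix.smul_mul, Matrix.one_mul, sub_sub_cancel]
  have hid' : Λ * j * Λᴴ = (-Complex.I) • (α * S) + Complex.I • (S * αᴴ) := by
    have h := congrArg (fun M => (-Complex.I) • M) hid
    simp only [smul_smul, neg_mul, Complex.I_mul_I, neg_neg, one_smul] at h
    rw [← h]; simp only [smul_sub, smul_add, neg_smul, smul_neg]; abel
  have hΛe : ∀ {k : Type} (t : Matrix (Fin n) k ℂ),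
      Λ * (j * (Λᴴ * t)) = (-Complex.I) • (α * (S * t)) + Complex.I • (S * (αᴴ * t)) := by
    intro k t
    calc Λ * (j * (Λᴴ * t)) = Λ * j * Λᴴ * t := by simp [Matrix.mul_assoc]
    _ = _ := by rw [hid']; simp [Matrix.add_mul, Matrix.smul_mul, Matrix.mul_assoc]
  simp only [conjTranspose_add, conjTranspose_one, conjTranspose_smul, conjTranspose_mul,
    conjTranspose_conjTranspose, hPiH, hSiH, hjH, Complex.star_def, Complex.conj_I,
    Matrix.add_mul, Matrix.mul_add, Matrix.sub_mul, Matrix.mul_sub,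
    Matrix.smul_mul, Matrix.mul_smul, Matrix.mul_assoc, Matrix.one_mul, Matrix.mul_one,
    smul_smul, smul_sub, smul_add, hjj, hj2, hΛe, hαe, hαHe, hPP, hPiP, hQQ, hQiQ, hSS, hSiS,
    neg_mul, mul_neg, Matrix.neg_mul, Matrix.mul_neg, smul_neg, Complex.I_mul_I, neg_neg, one_smul, neg_smul]
  module

private lemma aux_d {n m₁ m₂ : ℕ} (P Pa : Matrix (Fin n) (Fin n) ℂ)
    (B : Matrix (Fin n) (Fin m₁) ℂ) (D : Matrix (Fin m₁) (Fin n) ℂ)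
    (C : Matrix (Fin m₂) (Fin n) ℂ)
    (hP : IsUnit P) (hPa : IsUnit Pa) (hdiff : Pa - P = Complex.I • (B * D)) :
    IsUnit (1 + Complex.I • (D * P⁻¹ * B)) ∧
      (C * P⁻¹ * B) * (1 + Complex.I • (D * P⁻¹ * B))⁻¹ = C * Pa⁻¹ * B := by
  have hPd : IsUnit P.det := (Matrix.isUnit_iff_isUnit_det P).mp hP
  have hPad : IsUnit Pa.det := (Matrix.isUnit_iff_isUnit_det Pa).mp hPa
  have hPP : ∀ {k : Type} (t : Matrix (Fin n) k ℂ), P * (P⁻¹ * t) = t := fun t => by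
    rw [← Matrix.mul_assoc, Matrix.mul_nonsing_inv _ hPd, Matrix.one_mul]
  have hPiP : ∀ {k : Type} (t : Matrix (Fin n) k ℂ), P⁻¹ * (P * t) = t := fun t => by
    rw [← Matrix.mul_assoc, Matrix.nonsing_inv_mul _ hPd, Matrix.one_mul]
  have hPaPa : ∀ {k : Type} (t : Matrix (Fin n) k ℂ), Pa * (Pa⁻¹ * t) = t := fun t => by
    rw [← Matrix.mul_assoc, Matrix.mul_nonsing_inv _ hPad, Matrix.one_mul]
  have hPaiPa : ∀ {k : Type} (t : Matrix (Fin n) k ℂ), Pa⁻¹ * (Pa * t) = t := fun t => by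
    rw [← Matrix.mul_assoc, Matrix.nonsing_inv_mul _ hPad, Matrix.one_mul]
  have hBD : ∀ {k : Type} (t : Matrix (Fin n) k ℂ),
      B * (D * t) = (-Complex.I) • (Pa * t) + Complex.I • (P * t) := by
    intro k t
    have h := congrArg (fun M => (-Complex.I) • M) hdiff
    simp only [smul_smul, neg_mul, Complex.I_mul_I, neg_neg, one_smul] at h
    have h0 : B * D = (-Complex.I) • Pa + Complex.I • P := by rw [← h]; simp only [smul_sub, smul_add, neg_smul, smul_neg]; abel
    rw [← Matrix.mul_assoc, h0, Matrix.add_mul, Matrix.smul_mul, Matrix.smul_mul]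
  have hWV : (1 + Complex.I • (D * P⁻¹ * B)) * (1 - Complex.I • (D * Pa⁻¹ * B)) = 1 := by
    simp only [Matrix.add_mul, Matrix.mul_add, Matrix.sub_mul, Matrix.mul_sub,
      Matrix.smul_mul, Matrix.mul_smul, Matrix.mul_assoc, Matrix.one_mul, Matrix.mul_one,
      smul_smul, smul_sub, smul_add, hBD, hPP, hPiP, hPaPa, hPaiPa,
      neg_mul, mul_neg, Matrix.neg_mul, Matrix.mul_neg, smul_neg, Complex.I_mul_I, neg_neg, one_smul, neg_smul]
    module
  have hVW : (1 - Complex.I • (D * Pa⁻¹ * B)) * (1 + Complex.I • (D * P⁻¹ * B)) = 1 := by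
    simp only [Matrix.add_mul, Matrix.mul_add, Matrix.sub_mul, Matrix.mul_sub,
      Matrix.smul_mul, Matrix.mul_smul, Matrix.mul_assoc, Matrix.one_mul, Matrix.mul_one,
      smul_smul, smul_sub, smul_add, hBD, hPP, hPiP, hPaPa, hPaiPa,
      neg_mul, mul_neg, Matrix.neg_mul, Matrix.mul_neg, smul_neg, Complex.I_mul_I, neg_neg, one_smul, neg_smul]
    module
  refine ⟨⟨⟨_, _, hWV, hVW⟩, rfl⟩, ?_⟩
  rw [Matrix.inv_eq_right_inv hWV]
  simp only [Matrix.add_mul, Matrix.mul_add, Matrix.sub_mul, Matrix.mul_sub,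
    Matrix.smul_mul, Matrix.mul_smul, Matrix.mul_assoc, Matrix.one_mul, Matrix.mul_one,
    smul_smul, smul_sub, smul_add, hBD, hPP, hPiP, hPaPa, hPaiPa,
    neg_mul, mul_neg, Matrix.neg_mul, Matrix.mul_neg, smul_neg, Complex.I_mul_I, neg_neg, one_smul, neg_smul]
  module


/-- Theorem 0.1 (ii): construction of the weakly `j`-elementary, regular function `W`
from a minimal realization of a contraction `R(λ) = C(λI - A)⁻¹B` via the Riccati
solution `X` and the parameter matrices `α = A + iBBᴴX`, `S₀ = X⁻¹`, `γ₁ = B`,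
`γ = -iS₀Cᴴ`, `Λ₀ = [γ₁ γ]`. -/
theorem recovery_of_weakly_j_elementary_function
    (n m₁ m₂ : ℕ) (hn : 0 < n) (hm₁ : 0 < m₁) (hm₂ : 0 < m₂)
    (A : Matrix (Fin n) (Fin n) ℂ) (B : Matrix (Fin n) (Fin m₁) ℂ)
    (C : Matrix (Fin m₂) (Fin n) ℂ)
    (hAB : FullRange A B) (hAC : FullRange Aᴴ Cᴴ)
    (hcontr : ∀ l : ℝ, IsUnit ((l : ℂ) • (1 : Matrix (Fin n) (Fin n) ℂ) - A) →
      ((1 : Matrix (Fin m₁) (Fin m₁) ℂ) -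
        (C * ((l : ℂ) • (1 : Matrix (Fin n) (Fin n) ℂ) - A)⁻¹ * B)ᴴ *
        (C * ((l : ℂ) • (1 : Matrix (Fin n) (Fin n) ℂ) - A)⁻¹ * B)).PosSemidef)
    (X : Matrix (Fin n) (Fin n) ℂ)
    (hX : X.IsHermitian) (hXinv : IsUnit X)
    (hRic : Complex.I • (X * A - Aᴴ * X) = Cᴴ * C + X * B * Bᴴ * X)
    (hspec : ∀ μ ∈ spectrum ℂ (A + Complex.I • (B * Bᴴ * X)), μ.im ≤ 0)
    (α S₀ : Matrix (Fin n) (Fin n) ℂ)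
    (γ₁ : Matrix (Fin n) (Fin m₁) ℂ) (γ : Matrix (Fin n) (Fin m₂) ℂ)
    (Λ₀ : Matrix (Fin n) (Fin m₁ ⊕ Fin m₂) ℂ)
    (j : Matrix (Fin m₁ ⊕ Fin m₂) (Fin m₁ ⊕ Fin m₂) ℂ)
    (hα : α = A + Complex.I • (B * Bᴴ * X)) (hS₀ : S₀ = X⁻¹)
    (hγ₁ : γ₁ = B) (hγ : γ = -(Complex.I • (S₀ * Cᴴ)))
    (hΛ₀ : Λ₀ = Matrix.fromCols γ₁ γ)
    (hj : j = Matrix.fromBlocks 1 0 0 (-1)) :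
    -- (a) the identity (0.2')
    (α * S₀ - S₀ * αᴴ = Complex.I • (γ₁ * γ₁ᴴ - γ * γᴴ)) ∧
    -- (b) W is j-unitary on the real axis
    (∀ l : ℝ, IsUnit ((l : ℂ) • (1 : Matrix (Fin n) (Fin n) ℂ) - α) →
      (1 + Complex.I • (j * Λ₀ᴴ * S₀⁻¹ *
          ((l : ℂ) • (1 : Matrix (Fin n) (Fin n) ℂ) - α)⁻¹ * Λ₀))ᴴ * j *
        (1 + Complex.I • (j * Λ₀ᴴ * S₀⁻¹ *
          ((l : ℂ) • (1 : Matrix (Fin n) (Fin n) ℂ) - α)⁻¹ * Λ₀)) = j) ∧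
    -- (c) regularity: σ(α) in the closed lower half-plane
    (∀ μ ∈ spectrum ℂ α, μ.im ≤ 0) ∧
    -- (d) W₂₁ W₁₁⁻¹ = R
    (∀ l : ℂ, IsUnit (l • (1 : Matrix (Fin n) (Fin n) ℂ) - α) →
      IsUnit (l • (1 : Matrix (Fin n) (Fin n) ℂ) - A) →
      IsUnit (1 + Complex.I •
        (γ₁ᴴ * S₀⁻¹ * (l • (1 : Matrix (Fin n) (Fin n) ℂ) - α)⁻¹ * γ₁)) ∧
      (-(Complex.I • (γᴴ * S₀⁻¹ * (l • (1 : Matrix (Fin n) (Fin n) ℂ) - α)⁻¹ * γ₁))) *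
        (1 + Complex.I •
          (γ₁ᴴ * S₀⁻¹ * (l • (1 : Matrix (Fin n) (Fin n) ℂ) - α)⁻¹ * γ₁))⁻¹ =
      C * (l • (1 : Matrix (Fin n) (Fin n) ℂ) - A)⁻¹ * B) := by
  have hXd : IsUnit X.det := (Matrix.isUnit_iff_isUnit_det X).mp hXinv
  have hXH : Xᴴ = X := hX
  have hXiH : (X⁻¹)ᴴ = X⁻¹ := by rw [Matrix.conjTranspose_nonsing_inv, hXH]
  have hXii : (X⁻¹)⁻¹ = X := Matrix.nonsing_inv_nonsing_inv X hXd
  have hXX : ∀ {k : Type} (t : Matrix (Fin n) k ℂ), X * (X⁻¹ * t) = t := fun t => by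
    rw [← Matrix.mul_assoc, Matrix.mul_nonsing_inv _ hXd, Matrix.one_mul]
  have hXiX : ∀ {k : Type} (t : Matrix (Fin n) k ℂ), X⁻¹ * (X * t) = t := fun t => by
    rw [← Matrix.mul_assoc, Matrix.nonsing_inv_mul _ hXd, Matrix.one_mul]
  have h2 : X * X⁻¹ = 1 := Matrix.mul_nonsing_inv _ hXd
  have hkey := congrArg (fun M => X⁻¹ * M * X⁻¹) hRic
  simp only [Matrix.mul_add, Matrix.add_mul, Matrix.mul_smul, Matrix.smul_mul,
    Matrix.mul_sub, Matrix.sub_mul, Matrix.mul_assoc, hXiX, h2, Matrix.mul_one, Matrix.one_mul,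
    smul_sub] at hkey
  have parta : α * S₀ - S₀ * αᴴ = Complex.I • (γ₁ * γ₁ᴴ - γ * γᴴ) := by
    rw [hα, hγ₁, hγ, hS₀]
    simp only [conjTranspose_add, conjTranspose_smul, conjTranspose_mul, conjTranspose_neg,
      conjTranspose_conjTranspose, hXH, hXiH, Complex.star_def, Complex.conj_I,
      Matrix.mul_add, Matrix.add_mul, Matrix.sub_mul, Matrix.mul_sub,
      Matrix.smul_mul, Matrix.mul_smul, Matrix.neg_mul, Matrix.mul_neg, smul_neg, neg_smul,
      neg_neg, Matrix.mul_assoc, Matrix.one_mul, Matrix.mul_one, smul_smul, smul_sub, smul_add,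
      hXX, hXiX, h2, Complex.I_mul_I, one_smul]
    rw [eq_sub_of_add_eq hkey.symm]
    simp only [smul_sub, smul_add, smul_smul, Complex.I_mul_I, neg_smul, one_smul,
      smul_neg, neg_neg]
    module
  refine ⟨parta, ?_, ?_, ?_⟩
  · intro l hl
    have hSH : S₀ᴴ = S₀ := by rw [hS₀]; exact hXiH
    have hSu : IsUnit S₀ := by rw [hS₀]; exact Matrix.isUnit_nonsing_inv_iff.mpr hXinv
    have hjH : jᴴ = j := by rw [hj]; simp [Matrix.fromBlocks_conjTranspose]
    have hj2 : j * j = 1 := by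
      rw [hj, Matrix.fromBlocks_multiply]; simp [Matrix.fromBlocks_one]
    have hLjL : Λ₀ * j * Λ₀ᴴ = γ₁ * γ₁ᴴ - γ * γᴴ := by
      rw [hΛ₀, hj, Matrix.fromCols_mul_fromBlocks,
        Matrix.conjTranspose_fromCols_eq_fromRows_conjTranspose,
        Matrix.fromCols_mul_fromRows]
      simp [Matrix.mul_neg, Matrix.neg_mul, sub_eq_add_neg]
    have hid : α * S₀ - S₀ * αᴴ = Complex.I • (Λ₀ * j * Λ₀ᴴ) := by rw [hLjL]; exact parta
    exact aux_b α S₀ Λ₀ j hSH hSu hjH hj2 hid l hl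
  · intro μ hμ; exact hspec μ (by rwa [hα] at hμ)
  · intro l hlα hlA
    have hdiff : ((l : ℂ) • (1 : Matrix (Fin n) (Fin n) ℂ) - A) -
        ((l : ℂ) • (1 : Matrix (Fin n) (Fin n) ℂ) - α) = Complex.I • (γ₁ * (γ₁ᴴ * S₀⁻¹)) := by
      rw [hα, hγ₁, hS₀, hXii]
      simp only [Matrix.mul_assoc]
      module
    obtain ⟨hu, heq⟩ := aux_d ((l : ℂ) • (1 : Matrix (Fin n) (Fin n) ℂ) - α)
      ((l : ℂ) • (1 : Matrix (Fin n) (Fin n) ℂ) - A) γ₁ (γ₁ᴴ * S₀⁻¹) C hlα hlA hdiff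
    refine ⟨hu, ?_⟩
    have hfac : -(Complex.I • (γᴴ * S₀⁻¹ *
        ((l : ℂ) • (1 : Matrix (Fin n) (Fin n) ℂ) - α)⁻¹ * γ₁)) =
        C * ((l : ℂ) • (1 : Matrix (Fin n) (Fin n) ℂ) - α)⁻¹ * γ₁ := by
      rw [hγ, hS₀, hXii]
      simp only [conjTranspose_neg, conjTranspose_smul, conjTranspose_mul,
        conjTranspose_conjTranspose, hXiH, Complex.star_def, Complex.conj_I,
        Matrix.neg_mul, Matrix.mul_neg, smul_neg, neg_smul, neg_neg,
        Matrix.smul_mul, Matrix.mul_smul, smul_smul, Complex.I_mul_I, neg_mul, one_smul,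
        Matrix.mul_assoc, hXiX]
    rw [hfac, heq, hγ₁]
end

section
/- Let m = m₁ + m₂, let j be the m×m signature matrix j = diag(I_{m₁}, −I_{m₂}), let α be an n×n complex matrix, S a positive definite Hermitian n×n matrix, and Λ an n×m complex matrix satisfying αS − Sα* = iΛjΛ*. Define W(λ) = I_m + i j Λ* S⁻¹ (λIₙ − α)⁻¹ Λ for complex λ with λIₙ − α invertible. Then for every λ with Im λ ≥ 0 (and λIₙ − α, λ̄Iₙ − α* invertible), the matrix W(λ)* j W(λ) − j is positive semidefinite, and for every λ with Im λ ≤ 0 (and λIₙ − α, λ̄Iₙ − α* invertible), the matrix j − W(λ)* j W(λ) is positive semidefinite. -/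
open Matrix
open scoped ComplexOrder

lemma abstract_key {n k : Type*} [Fintype n] [Fintype k] [DecidableEq n] [DecidableEq k]
    (A Ai B Bi S T α β : Matrix n n ℂ) (Λ : Matrix n k ℂ) (U : Matrix k n ℂ)
    (j : Matrix k k ℂ) (c : ℂ)
    (hjj : j * j = 1)
    (hAAi : A * Ai = 1) (hBiB : Bi * B = 1)
    (hST : S * T = 1) (hTS : T * S = 1)
    (hΛ : Λ * j * U = (-Complex.I) • (α * S - S * β))
    (hc : Complex.I • (B * T) + ((-Complex.I) • (T * A) + (-Complex.I) • (T * α - β * T))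
        = c • T) :
    (1 + (-Complex.I) • (U * (Bi * (T * (Λ * j))))) * j *
        (1 + Complex.I • (j * (U * (T * (Ai * Λ))))) - j
      = c • (U * (Bi * (T * (Ai * Λ)))) := by
  have hjcan : ∀ X : Matrix k k ℂ, j * (j * X) = X := fun X => by
    rw [← Matrix.mul_assoc, hjj, Matrix.one_mul]
  have hAcan : ∀ X : Matrix n k ℂ, A * (Ai * X) = X := fun X => by
    rw [← Matrix.mul_assoc, hAAi, Matrix.one_mul]
  have hBcan : ∀ X : Matrix n k ℂ, Bi * (B * X) = X := fun X => by
    rw [← Matrix.mul_assoc, hBiB, Matrix.one_mul]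
  have hScan : ∀ X : Matrix n k ℂ, S * (T * X) = X := fun X => by
    rw [← Matrix.mul_assoc, hST, Matrix.one_mul]
  have hTcan : ∀ X : Matrix n k ℂ, T * (S * X) = X := fun X => by
    rw [← Matrix.mul_assoc, hTS, Matrix.one_mul]
  set P : Matrix k k ℂ := U * (Bi * (T * (Λ * j))) with hP
  set Q : Matrix k k ℂ := j * (U * (T * (Ai * Λ))) with hQ
  have expand : (1 + (-Complex.I) • P) * j * (1 + Complex.I • Q) - j
      = Complex.I • (j * Q) + ((-Complex.I) • (P * j) + (P * j) * Q) := by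
    simp only [Matrix.add_mul, Matrix.mul_add, Matrix.one_mul, Matrix.mul_one,
      Matrix.smul_mul, Matrix.mul_smul, smul_smul, neg_mul, Complex.I_mul_I,
      neg_neg, one_smul, neg_smul]
    match_scalars <;> simp [Complex.I_sq] <;> ring
  have t2' : P * j = U * (Bi * (T * Λ)) := by
    rw [hP]
    simp only [Matrix.mul_assoc]
    rw [hjj, Matrix.mul_one]
  have t1 : j * Q = U * (Bi * ((B * T) * (Ai * Λ))) := by
    rw [hQ, hjcan, Matrix.mul_assoc B T, hBcan]
  have t2 : P * j = U * (Bi * ((T * A) * (Ai * Λ))) := by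
    rw [t2', Matrix.mul_assoc T A, hAcan]
  have t3 : (P * j) * Q = U * (Bi * (((-Complex.I) • (T * α - β * T)) * (Ai * Λ))) := by
    rw [t2', hQ]
    simp only [Matrix.mul_assoc]
    rw [← Matrix.mul_assoc Λ j, ← Matrix.mul_assoc (Λ * j) U, hΛ]
    congr 2
    rw [Matrix.smul_mul, Matrix.mul_smul, Matrix.smul_mul]
    congr 1
    rw [Matrix.sub_mul, Matrix.mul_sub, Matrix.sub_mul]
    congr 1
    · rw [Matrix.mul_assoc α S, hScan, Matrix.mul_assoc T α]
    · rw [Matrix.mul_assoc S β, hTcan, Matrix.mul_assoc β T]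
  have grp : U * (Bi * ((Complex.I • (B * T) + ((-Complex.I) • (T * A)
        + (-Complex.I) • (T * α - β * T))) * (Ai * Λ)))
      = Complex.I • (U * (Bi * ((B * T) * (Ai * Λ))))
        + ((-Complex.I) • (U * (Bi * ((T * A) * (Ai * Λ))))
          + U * (Bi * (((-Complex.I) • (T * α - β * T)) * (Ai * Λ)))) := by
    simp only [Matrix.add_mul, Matrix.mul_add, Matrix.smul_mul, Matrix.mul_smul]
  rw [expand, t1, t3, t2, ← grp, hc, Matrix.smul_mul, Matrix.mul_smul, Matrix.mul_smul]

lemma psd_smul_aux {k : Type*} [Fintype k] {M : Matrix k k ℂ} (hM : M.PosSemidef)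
    {c : ℝ} (hc : 0 ≤ c) : ((c : ℂ) • M).PosSemidef := by
  constructor
  · unfold Matrix.IsHermitian
    rw [conjTranspose_smul, hM.isHermitian.eq]
    simp
  · intro x
    have hc' : (0 : ℂ) ≤ (c : ℂ) := by exact_mod_cast hc
    refine le_of_le_of_eq (mul_nonneg hc' (hM.2 x)) ?_
    simp only [Finsupp.sum, Finset.mul_sum, Matrix.smul_apply, smul_eq_mul]
    exact Finset.sum_congr rfl fun i _ => Finset.sum_congr rfl fun j _ => by ring

lemma concrete_key {n k : Type*} [Fintype n] [Fintype k] [DecidableEq n] [DecidableEq k]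
    (α S : Matrix n n ℂ) (hS : S.PosDef) (Λ : Matrix n k ℂ) (j : Matrix k k ℂ)
    (hjH : jᴴ = j) (hjj : j * j = 1)
    (hid : α * S - S * αᴴ = Complex.I • (Λ * j * Λᴴ))
    (l : ℂ) (hA : IsUnit (l • (1 : Matrix n n ℂ) - α))
    (hB : IsUnit ((starRingEnd ℂ l) • (1 : Matrix n n ℂ) - αᴴ)) :
    (1 + Complex.I • (j * Λᴴ * S⁻¹ * (l • (1 : Matrix n n ℂ) - α)⁻¹ * Λ))ᴴ * j *
      (1 + Complex.I • (j * Λᴴ * S⁻¹ * (l • (1 : Matrix n n ℂ) - α)⁻¹ * Λ)) - j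
    = ((2 * l.im : ℝ) : ℂ) •
        (((l • (1 : Matrix n n ℂ) - α)⁻¹ * Λ)ᴴ * S⁻¹ *
          ((l • (1 : Matrix n n ℂ) - α)⁻¹ * Λ)) := by
  have hBA : ((starRingEnd ℂ l) • (1 : Matrix n n ℂ) - αᴴ)
      = (l • (1 : Matrix n n ℂ) - α)ᴴ := by
    simp [conjTranspose_smul]
  rw [hBA] at hB
  have hAd : IsUnit (l • (1 : Matrix n n ℂ) - α).det := (Matrix.isUnit_iff_isUnit_det _).mp hA
  have hBd : IsUnit ((l • (1 : Matrix n n ℂ) - α)ᴴ).det := (Matrix.isUnit_iff_isUnit_det _).mp hB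
  have hSd : IsUnit S.det := (Matrix.isUnit_iff_isUnit_det _).mp hS.isUnit
  have hSH : Sᴴ = S := hS.isHermitian
  have hTH : (S⁻¹)ᴴ = S⁻¹ := by rw [Matrix.conjTranspose_nonsing_inv, hSH]
  have hAiH : ((l • (1 : Matrix n n ℂ) - α)⁻¹)ᴴ = ((l • (1 : Matrix n n ℂ) - α)ᴴ)⁻¹ :=
    Matrix.conjTranspose_nonsing_inv _
  have hW : (1 + Complex.I • (j * Λᴴ * S⁻¹ * (l • (1 : Matrix n n ℂ) - α)⁻¹ * Λ))ᴴ
      = 1 + (-Complex.I) • (Λᴴ * (((l • (1 : Matrix n n ℂ) - α)ᴴ)⁻¹ * (S⁻¹ * (Λ * j)))) := by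
    simp only [conjTranspose_add, conjTranspose_one, conjTranspose_smul, conjTranspose_mul,
      conjTranspose_conjTranspose, hAiH, hTH, hjH, Complex.star_def, Complex.conj_I,
      Matrix.mul_assoc]
  have hc : Complex.I • ((l • (1 : Matrix n n ℂ) - α)ᴴ * S⁻¹)
      + ((-Complex.I) • (S⁻¹ * (l • (1 : Matrix n n ℂ) - α))
        + (-Complex.I) • (S⁻¹ * α - αᴴ * S⁻¹)) = ((2 * l.im : ℝ) : ℂ) • S⁻¹ := by
    rw [← hBA]
    rw [Matrix.sub_mul, Matrix.mul_sub, Matrix.smul_mul, Matrix.one_mul,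
      Matrix.mul_smul, Matrix.mul_one]
    match_scalars <;>
      simp [Complex.ext_iff, Complex.mul_re, Complex.mul_im] <;> ring
  have hΛ : Λ * j * Λᴴ = (-Complex.I) • (α * S - S * αᴴ) := by
    rw [hid, smul_smul]
    simp
  have habs := abstract_key (l • (1 : Matrix n n ℂ) - α) (l • (1 : Matrix n n ℂ) - α)⁻¹
    ((l • (1 : Matrix n n ℂ) - α)ᴴ) ((l • (1 : Matrix n n ℂ) - α)ᴴ)⁻¹
    S S⁻¹ α αᴴ Λ Λᴴ j ((2 * l.im : ℝ) : ℂ) hjj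
    (Matrix.mul_nonsing_inv _ hAd) (Matrix.nonsing_inv_mul _ hBd)
    (Matrix.mul_nonsing_inv _ hSd) (Matrix.nonsing_inv_mul _ hSd) hΛ hc
  rw [hW]
  calc (1 + (-Complex.I) • (Λᴴ * (((l • (1 : Matrix n n ℂ) - α)ᴴ)⁻¹ * (S⁻¹ * (Λ * j))))) * j *
        (1 + Complex.I • (j * Λᴴ * S⁻¹ * (l • (1 : Matrix n n ℂ) - α)⁻¹ * Λ)) - j
      = (1 + (-Complex.I) • (Λᴴ * (((l • (1 : Matrix n n ℂ) - α)ᴴ)⁻¹ * (S⁻¹ * (Λ * j))))) * j *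
        (1 + Complex.I • (j * (Λᴴ * (S⁻¹ * ((l • (1 : Matrix n n ℂ) - α)⁻¹ * Λ))))) - j := by
        simp only [Matrix.mul_assoc]
    _ = ((2 * l.im : ℝ) : ℂ) • (Λᴴ * (((l • (1 : Matrix n n ℂ) - α)ᴴ)⁻¹ *
          (S⁻¹ * ((l • (1 : Matrix n n ℂ) - α)⁻¹ * Λ)))) := habs
    _ = ((2 * l.im : ℝ) : ℂ) • (((l • (1 : Matrix n n ℂ) - α)⁻¹ * Λ)ᴴ * S⁻¹ *
          ((l • (1 : Matrix n n ℂ) - α)⁻¹ * Λ)) := by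
        simp only [conjTranspose_mul, hAiH, Matrix.mul_assoc]

/-- Theorem 0.1 (iii), second assertion: if `S > 0` and `αS - Sαᴴ = iΛjΛᴴ`, then
`W(λ) = I + ijΛᴴS⁻¹(λI - α)⁻¹Λ` is a `j`-elementary factor:
`W(λ)ᴴ j W(λ) ≥ j` in the closed upper half-plane and
`W(λ)ᴴ j W(λ) ≤ j` in the closed lower half-plane. -/
theorem j_elementary_factor_of_posdef
    (n m₁ m₂ : ℕ)
    (α S : Matrix (Fin n) (Fin n) ℂ) (hS : S.PosDef)
    (Λ : Matrix (Fin n) (Fin m₁ ⊕ Fin m₂) ℂ)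
    (j : Matrix (Fin m₁ ⊕ Fin m₂) (Fin m₁ ⊕ Fin m₂) ℂ)
    (hj : j = Matrix.fromBlocks 1 0 0 (-1))
    (hid : α * S - S * αᴴ = Complex.I • (Λ * j * Λᴴ)) :
    (∀ l : ℂ, 0 ≤ l.im →
      IsUnit (l • (1 : Matrix (Fin n) (Fin n) ℂ) - α) →
      IsUnit ((starRingEnd ℂ l) • (1 : Matrix (Fin n) (Fin n) ℂ) - αᴴ) →
      ((1 + Complex.I • (j * Λᴴ * S⁻¹ * (l • (1 : Matrix (Fin n) (Fin n) ℂ) - α)⁻¹ * Λ))ᴴ * j *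
        (1 + Complex.I • (j * Λᴴ * S⁻¹ * (l • (1 : Matrix (Fin n) (Fin n) ℂ) - α)⁻¹ * Λ)) -
        j).PosSemidef) ∧
    (∀ l : ℂ, l.im ≤ 0 →
      IsUnit (l • (1 : Matrix (Fin n) (Fin n) ℂ) - α) →
      IsUnit ((starRingEnd ℂ l) • (1 : Matrix (Fin n) (Fin n) ℂ) - αᴴ) →
      (j - (1 + Complex.I • (j * Λᴴ * S⁻¹ * (l • (1 : Matrix (Fin n) (Fin n) ℂ) - α)⁻¹ * Λ))ᴴ * j *
        (1 + Complex.I • (j * Λᴴ * S⁻¹ *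
          (l • (1 : Matrix (Fin n) (Fin n) ℂ) - α)⁻¹ * Λ))).PosSemidef) := by
  have hjH : jᴴ = j := by
    rw [hj, Matrix.fromBlocks_conjTranspose]
    simp
  have hjj : j * j = 1 := by
    rw [hj, Matrix.fromBlocks_multiply]
    simp [← Matrix.fromBlocks_one]
  have hpsd : ∀ l : ℂ, IsUnit (l • (1 : Matrix (Fin n) (Fin n) ℂ) - α) →
      (((l • (1 : Matrix (Fin n) (Fin n) ℂ) - α)⁻¹ * Λ)ᴴ * S⁻¹ *
        ((l • (1 : Matrix (Fin n) (Fin n) ℂ) - α)⁻¹ * Λ)).PosSemidef := by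
    intro l _
    exact (hS.inv.posSemidef).conjTranspose_mul_mul_same _
  constructor
  · intro l him hA hB
    rw [concrete_key α S hS Λ j hjH hjj hid l hA hB]
    exact psd_smul_aux (hpsd l hA) (by linarith)
  · intro l him hA hB
    have h1 : j - (1 + Complex.I • (j * Λᴴ * S⁻¹ * (l • (1 : Matrix (Fin n) (Fin n) ℂ) - α)⁻¹ * Λ))ᴴ * j *
        (1 + Complex.I • (j * Λᴴ * S⁻¹ * (l • (1 : Matrix (Fin n) (Fin n) ℂ) - α)⁻¹ * Λ))
      = ((-(2 * l.im) : ℝ) : ℂ) • (((l • (1 : Matrix (Fin n) (Fin n) ℂ) - α)⁻¹ * Λ)ᴴ * S⁻¹ *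
          ((l • (1 : Matrix (Fin n) (Fin n) ℂ) - α)⁻¹ * Λ)) := by
      rw [← neg_sub, concrete_key α S hS Λ j hjH hjj hid l hA hB, ← neg_smul]
      norm_cast
    rw [h1]
    exact psd_smul_aux (hpsd l hA) (by linarith)
end

section
/- Let θ be an n×n complex matrix, S₀ an invertible Hermitian n×n matrix, and Λ₀ an n×m complex matrix satisfying θS₀ − S₀θ* = −iΛ₀Λ₀*. For complex λ with λIₙ − θ and λ̄Iₙ − θ* invertible, define 𝐒(λ) = I_m − iΛ₀*S₀⁻¹(λIₙ − θ)⁻¹Λ₀. Then 𝐒(λ)*𝐒(λ) = I_m + i(λ − λ̄)Λ₀*(λ̄Iₙ − θ*)⁻¹S₀⁻¹(λIₙ − θ)⁻¹Λ₀; in particular, for every real λ with λIₙ − θ invertible, 𝐒(λ) is unitary: 𝐒(λ)*𝐒(λ) = I_m. -/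
open Matrix

lemma key_aux {n m : ℕ} (A B Si Ai Bi : Matrix (Fin n) (Fin n) ℂ)
    (Λ : Matrix (Fin n) (Fin m) ℂ) (c : ℂ)
    (hAi : A * Ai = 1) (hBiB : Bi * B = 1)
    (h : Si * (Λ * Λᴴ) * Si = Complex.I • (B * Si - Si * A + c • Si)) :
    (1 + Complex.I • (Λᴴ * Bi * Si * Λ)) * (1 - Complex.I • (Λᴴ * Si * Ai * Λ)) =
      1 + (Complex.I * c) • (Λᴴ * Bi * Si * Ai * Λ) := by
  have hQP : (Λᴴ * Bi * Si * Λ) * (Λᴴ * Si * Ai * Λ)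
      = Complex.I • (Λᴴ * Si * Ai * Λ) - Complex.I • (Λᴴ * Bi * Si * Λ)
        + (Complex.I * c) • (Λᴴ * Bi * Si * Ai * Λ) := by
    have e1 : (Λᴴ * Bi * Si * Λ) * (Λᴴ * Si * Ai * Λ)
        = Λᴴ * Bi * (Si * (Λ * Λᴴ) * Si) * Ai * Λ := by
      simp only [Matrix.mul_assoc]
    rw [e1, h]
    simp only [Matrix.mul_smul, Matrix.smul_mul, Matrix.mul_sub, Matrix.sub_mul,
      Matrix.mul_add, Matrix.add_mul, smul_smul]
    have e2 : Λᴴ * (Bi * (B * (Si * (Ai * Λ)))) = Λᴴ * (Si * (Ai * Λ)) := by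
      rw [show Bi * (B * (Si * (Ai * Λ))) = (Bi * B) * (Si * (Ai * Λ)) by
        simp only [Matrix.mul_assoc], hBiB, Matrix.one_mul]
    have e3 : Λᴴ * (Bi * (Si * (A * (Ai * Λ)))) = Λᴴ * (Bi * (Si * Λ)) := by
      rw [show Si * (A * (Ai * Λ)) = Si * ((A * Ai) * Λ) by simp only [Matrix.mul_assoc],
        hAi, Matrix.one_mul]
    simp only [Matrix.mul_assoc]
    rw [e2, e3]
    module
  have expand : (1 + Complex.I • (Λᴴ * Bi * Si * Λ)) * (1 - Complex.I • (Λᴴ * Si * Ai * Λ))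
      = 1 - Complex.I • (Λᴴ * Si * Ai * Λ) + Complex.I • (Λᴴ * Bi * Si * Λ)
        + ((Λᴴ * Bi * Si * Λ) * (Λᴴ * Si * Ai * Λ)) := by
    simp only [Matrix.mul_sub, Matrix.add_mul, Matrix.mul_one, Matrix.one_mul,
      Matrix.smul_mul, Matrix.mul_smul, smul_add, smul_smul, Complex.I_mul_I, neg_one_smul]
    module
  rw [expand, hQP]
  module

/-- Identity (n1.8) / Corollary 1.1: if `θS₀ - S₀θᴴ = -iΛ₀Λ₀ᴴ` with `S₀` invertible
Hermitian, then `𝐒(λ) = I - iΛ₀ᴴS₀⁻¹(λI - θ)⁻¹Λ₀` satisfies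
`𝐒(λ)ᴴ𝐒(λ) = I + i(λ - λ̄)Λ₀ᴴ(λ̄I - θᴴ)⁻¹S₀⁻¹(λI - θ)⁻¹Λ₀`;
in particular `𝐒(λ)` is unitary for real `λ`. -/
theorem unitary_completion_identity
    (n m : ℕ)
    (θ S₀ : Matrix (Fin n) (Fin n) ℂ)
    (hS₀ : S₀.IsHermitian) (hS₀inv : IsUnit S₀)
    (Λ₀ : Matrix (Fin n) (Fin m) ℂ)
    (hid : θ * S₀ - S₀ * θᴴ = -(Complex.I • (Λ₀ * Λ₀ᴴ))) :
    (∀ l : ℂ, IsUnit (l • (1 : Matrix (Fin n) (Fin n) ℂ) - θ) →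
      IsUnit ((starRingEnd ℂ l) • (1 : Matrix (Fin n) (Fin n) ℂ) - θᴴ) →
      (1 - Complex.I • (Λ₀ᴴ * S₀⁻¹ * (l • (1 : Matrix (Fin n) (Fin n) ℂ) - θ)⁻¹ * Λ₀))ᴴ *
        (1 - Complex.I • (Λ₀ᴴ * S₀⁻¹ * (l • (1 : Matrix (Fin n) (Fin n) ℂ) - θ)⁻¹ * Λ₀)) =
      1 + (Complex.I * (l - starRingEnd ℂ l)) •
        (Λ₀ᴴ * ((starRingEnd ℂ l) • (1 : Matrix (Fin n) (Fin n) ℂ) - θᴴ)⁻¹ * S₀⁻¹ *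
          (l • (1 : Matrix (Fin n) (Fin n) ℂ) - θ)⁻¹ * Λ₀)) ∧
    (∀ l : ℝ, IsUnit ((l : ℂ) • (1 : Matrix (Fin n) (Fin n) ℂ) - θ) →
      (1 - Complex.I • (Λ₀ᴴ * S₀⁻¹ * ((l : ℂ) • (1 : Matrix (Fin n) (Fin n) ℂ) - θ)⁻¹ * Λ₀))ᴴ *
        (1 - Complex.I • (Λ₀ᴴ * S₀⁻¹ * ((l : ℂ) • (1 : Matrix (Fin n) (Fin n) ℂ) - θ)⁻¹ * Λ₀)) =
      1) := by
  have hΛ : Λ₀ * Λ₀ᴴ = Complex.I • (θ * S₀ - S₀ * θᴴ) := by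
    rw [hid]; simp [smul_smul, Complex.I_mul_I]
  have hSdet := (Matrix.isUnit_iff_isUnit_det S₀).mp hS₀inv
  have hSS : S₀ * S₀⁻¹ = 1 := Matrix.mul_nonsing_inv S₀ hSdet
  have hSSi : S₀⁻¹ * S₀ = 1 := Matrix.nonsing_inv_mul S₀ hSdet
  have hSiH : (S₀⁻¹)ᴴ = S₀⁻¹ := hS₀.inv.eq
  have main : ∀ l : ℂ, IsUnit (l • (1 : Matrix (Fin n) (Fin n) ℂ) - θ) →
      IsUnit ((starRingEnd ℂ l) • (1 : Matrix (Fin n) (Fin n) ℂ) - θᴴ) →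
      (1 - Complex.I • (Λ₀ᴴ * S₀⁻¹ * (l • (1 : Matrix (Fin n) (Fin n) ℂ) - θ)⁻¹ * Λ₀))ᴴ *
        (1 - Complex.I • (Λ₀ᴴ * S₀⁻¹ * (l • (1 : Matrix (Fin n) (Fin n) ℂ) - θ)⁻¹ * Λ₀)) =
      1 + (Complex.I * (l - starRingEnd ℂ l)) •
        (Λ₀ᴴ * ((starRingEnd ℂ l) • (1 : Matrix (Fin n) (Fin n) ℂ) - θᴴ)⁻¹ * S₀⁻¹ *
          (l • (1 : Matrix (Fin n) (Fin n) ℂ) - θ)⁻¹ * Λ₀) := by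
    intro l hA hB
    set A := l • (1 : Matrix (Fin n) (Fin n) ℂ) - θ with hAdef
    set B := (starRingEnd ℂ l) • (1 : Matrix (Fin n) (Fin n) ℂ) - θᴴ with hBdef
    have hAdet := (Matrix.isUnit_iff_isUnit_det A).mp hA
    have hBdet := (Matrix.isUnit_iff_isUnit_det B).mp hB
    have hAi : A * A⁻¹ = 1 := Matrix.mul_nonsing_inv A hAdet
    have hBiB : B⁻¹ * B = 1 := Matrix.nonsing_inv_mul B hBdet
    have hAH : Aᴴ = B := by
      rw [hAdef, hBdef, conjTranspose_sub, conjTranspose_smul, conjTranspose_one]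
      rfl
    have hkey : S₀⁻¹ * (Λ₀ * Λ₀ᴴ) * S₀⁻¹
        = Complex.I • (B * S₀⁻¹ - S₀⁻¹ * A + (l - starRingEnd ℂ l) • S₀⁻¹) := by
      rw [hΛ]
      have hc1 : S₀⁻¹ * (Complex.I • (θ * S₀ - S₀ * θᴴ)) * S₀⁻¹
          = Complex.I • (S₀⁻¹ * θ - θᴴ * S₀⁻¹) := by
        simp only [Matrix.mul_smul, Matrix.smul_mul, Matrix.mul_sub, Matrix.sub_mul]
        rw [show S₀⁻¹ * (θ * S₀) * S₀⁻¹ = S₀⁻¹ * θ * (S₀ * S₀⁻¹) by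
          simp only [Matrix.mul_assoc], hSS,
          show S₀⁻¹ * (S₀ * θᴴ) * S₀⁻¹ = (S₀⁻¹ * S₀) * (θᴴ * S₀⁻¹) by
          simp only [Matrix.mul_assoc], hSSi, Matrix.mul_one, Matrix.one_mul]
      rw [hc1, hAdef, hBdef]
      simp only [Matrix.sub_mul, Matrix.mul_sub, Matrix.smul_mul, Matrix.mul_smul,
        Matrix.one_mul, Matrix.mul_one]
      module
    have hconj : (1 - Complex.I • (Λ₀ᴴ * S₀⁻¹ * A⁻¹ * Λ₀))ᴴ
        = 1 + Complex.I • (Λ₀ᴴ * B⁻¹ * S₀⁻¹ * Λ₀) := by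
      rw [conjTranspose_sub, conjTranspose_one, conjTranspose_smul]
      simp only [conjTranspose_mul, conjTranspose_conjTranspose, hSiH,
        Matrix.conjTranspose_nonsing_inv, hAH]
      simp only [Complex.star_def, Complex.conj_I, neg_smul, sub_neg_eq_add, Matrix.mul_assoc]
    rw [hconj]
    exact key_aux A B S₀⁻¹ A⁻¹ B⁻¹ Λ₀ (l - starRingEnd ℂ l) hAi hBiB hkey
  refine ⟨main, fun l hA => ?_⟩
  have hconjl : starRingEnd ℂ (l : ℂ) = (l : ℂ) := Complex.conj_ofReal l
  have hB : IsUnit ((starRingEnd ℂ (l : ℂ)) • (1 : Matrix (Fin n) (Fin n) ℂ) - θᴴ) := by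
    rw [hconjl]
    have : (l : ℂ) • (1 : Matrix (Fin n) (Fin n) ℂ) - θᴴ
        = ((l : ℂ) • (1 : Matrix (Fin n) (Fin n) ℂ) - θ)ᴴ := by
      rw [conjTranspose_sub, conjTranspose_smul, conjTranspose_one]
      simp [Complex.star_def, Complex.conj_ofReal]
    rw [this, Matrix.isUnit_iff_isUnit_det, Matrix.det_conjTranspose]
    exact ((Matrix.isUnit_iff_isUnit_det _).mp hA).star
  have := main (l : ℂ) hA hB
  rw [this, hconjl]
  simp
end

section
/- Let α be an n×n complex matrix, S₀ a Hermitian n×n matrix, γ₁ an n×m₁ matrix and γ an n×m₂ matrix satisfying αS₀ − S₀α* = i(γ₁γ₁* − γγ*). For real x define Λ₁(x) = e^{−ixα}γ₁, Λ₂(x) = e^{ixα}γ, and S(x) = S₀ + ∫₀ˣ (Λ₁(t)Λ₁(t)* + Λ₂(t)Λ₂(t)*) dt. Then for every real x one has αS(x) − S(x)α* = i(Λ₁(x)Λ₁(x)* − Λ₂(x)Λ₂(x)*). -/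
open Matrix NormedSpace

attribute [local instance] Matrix.linftyOpNormedAddCommGroup Matrix.linftyOpNormedRing
  Matrix.linftyOpNormedAlgebra

variable {n : ℕ}

/-- entry evaluation as a continuous linear map -/
noncomputable def entryCLM (i k : Fin n) : Matrix (Fin n) (Fin n) ℂ →L[ℝ] ℂ :=
  LinearMap.toContinuousLinearMap
    { toFun := fun M => M i k
      map_add' := fun _ _ => rfl
      map_smul' := fun _ _ => rfl }

lemma entry_hasDerivAt {F : ℝ → Matrix (Fin n) (Fin n) ℂ} {F' : Matrix (Fin n) (Fin n) ℂ}
    {t : ℝ} (h : HasDerivAt F F' t) (i k : Fin n) :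
    HasDerivAt (fun s => F s i k) (F' i k) t := by
  exact ((entryCLM i k).hasFDerivAt.comp_hasDerivAt t h)

lemma entry_continuous {F : ℝ → Matrix (Fin n) (Fin n) ℂ} (h : Continuous F) (i k : Fin n) :
    Continuous fun s => F s i k := by
  exact (entryCLM i k).continuous.comp h

lemma hasDerivAt_comp_ofReal {M : Type*} [NormedAddCommGroup M] [NormedSpace ℂ M]
    {f : ℂ → M} {f' : M} {z : ℝ} (hf : HasDerivAt f f' (z : ℂ)) :
    HasDerivAt (fun y : ℝ => f y) f' z := by
  simpa [Function.comp_def] using ((hf.hasFDerivAt.restrictScalars ℝ).comp z Complex.ofRealCLM.hasFDerivAt).hasDerivAt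

lemma conj_hasDerivAt (c A : Matrix (Fin n) (Fin n) ℂ) (t : ℝ) :
    HasDerivAt (fun s : ℝ => exp ((s : ℂ) • c) * A * exp ((s : ℂ) • cᴴ))
      (c * (exp ((t : ℂ) • c) * A * exp ((t : ℂ) • cᴴ)) +
        (exp ((t : ℂ) • c) * A * exp ((t : ℂ) • cᴴ)) * cᴴ) t := by
  have h₁ : HasDerivAt (fun s : ℝ => exp ((s : ℂ) • c)) (exp ((t : ℂ) • c) * c) t :=
    hasDerivAt_comp_ofReal (hasDerivAt_exp_smul_const (𝕂 := ℂ) c (t : ℂ))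
  have h₂ : HasDerivAt (fun s : ℝ => exp ((s : ℂ) • cᴴ)) (exp ((t : ℂ) • cᴴ) * cᴴ) t :=
    hasDerivAt_comp_ofReal (hasDerivAt_exp_smul_const (𝕂 := ℂ) cᴴ (t : ℂ))
  have := (h₁.mul_const A).mul h₂
  have hcomm : exp ((t : ℂ) • c) * c = c * exp ((t : ℂ) • c) :=
    (((Commute.refl c).smul_left ((t : ℂ))).exp_left).eq
  refine this.congr_deriv ?_
  rw [hcomm]
  simp [mul_assoc]

lemma alg_identity (α G H : Matrix (Fin n) (Fin n) ℂ) :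
    Complex.I • (((-Complex.I) • α * G + G * (Complex.I • αᴴ)) -
      (Complex.I • α * H + H * ((-Complex.I) • αᴴ))) = α * (G + H) - (G + H) * αᴴ := by
  simp only [smul_sub, smul_add, smul_mul_assoc, mul_smul_comm, smul_smul, mul_neg, neg_mul,
    Complex.I_mul_I, neg_neg, one_smul, neg_one_smul, mul_add, add_mul]
  abel

/-- Identity (1.14): with `Λ₁(x) = e^{-ixα}γ₁`, `Λ₂(x) = e^{ixα}γ` and
`S(x) = S₀ + ∫₀ˣ (Λ₁Λ₁ᴴ + Λ₂Λ₂ᴴ)`, the identity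
`αS₀ - S₀αᴴ = i(γ₁γ₁ᴴ - γγᴴ)` propagates to
`αS(x) - S(x)αᴴ = i(Λ₁(x)Λ₁(x)ᴴ - Λ₂(x)Λ₂(x)ᴴ)` for every real `x`. -/
theorem lyapunov_identity_propagates
    (n m₁ m₂ : ℕ)
    (α S₀ : Matrix (Fin n) (Fin n) ℂ) (hS₀ : S₀.IsHermitian)
    (γ₁ : Matrix (Fin n) (Fin m₁) ℂ) (γ : Matrix (Fin n) (Fin m₂) ℂ)
    (hid : α * S₀ - S₀ * αᴴ = Complex.I • (γ₁ * γ₁ᴴ - γ * γᴴ))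
    (Λ₁ : ℝ → Matrix (Fin n) (Fin m₁) ℂ) (Λ₂ : ℝ → Matrix (Fin n) (Fin m₂) ℂ)
    (hΛ₁ : ∀ x : ℝ, Λ₁ x = NormedSpace.exp ((-(Complex.I * (x : ℂ))) • α) * γ₁)
    (hΛ₂ : ∀ x : ℝ, Λ₂ x = NormedSpace.exp ((Complex.I * (x : ℂ)) • α) * γ)
    (S : ℝ → Matrix (Fin n) (Fin n) ℂ)
    (hS : ∀ x : ℝ, S x = S₀ + Matrix.of fun i k =>
      ∫ t in (0:ℝ)..x, (Λ₁ t * (Λ₁ t)ᴴ + Λ₂ t * (Λ₂ t)ᴴ) i k) :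
    ∀ x : ℝ, α * S x - S x * αᴴ =
      Complex.I • (Λ₁ x * (Λ₁ x)ᴴ - Λ₂ x * (Λ₂ x)ᴴ) := by
  intro x
  set c₁ : Matrix (Fin n) (Fin n) ℂ := (-Complex.I) • α with hc₁def
  set c₂ : Matrix (Fin n) (Fin n) ℂ := Complex.I • α with hc₂def
  set A₁ : Matrix (Fin n) (Fin n) ℂ := γ₁ * γ₁ᴴ with hA₁def
  set A₂ : Matrix (Fin n) (Fin n) ℂ := γ * γᴴ with hA₂def
  set G₁ : ℝ → Matrix (Fin n) (Fin n) ℂ :=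
    fun t => exp ((t : ℂ) • c₁) * A₁ * exp ((t : ℂ) • c₁ᴴ) with hG₁def
  set G₂ : ℝ → Matrix (Fin n) (Fin n) ℂ :=
    fun t => exp ((t : ℂ) • c₂) * A₂ * exp ((t : ℂ) • c₂ᴴ) with hG₂def
  -- the integrand equals G₁ + G₂
  have hexpH₁ : ∀ t : ℝ, (exp ((t : ℂ) • c₁))ᴴ = exp ((t : ℂ) • c₁ᴴ) := by
    intro t
    rw [← Matrix.exp_conjTranspose]
    congr 1
    rw [conjTranspose_smul]
    simp
  have hexpH₂ : ∀ t : ℝ, (exp ((t : ℂ) • c₂))ᴴ = exp ((t : ℂ) • c₂ᴴ) := by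
    intro t
    rw [← Matrix.exp_conjTranspose]
    congr 1
    rw [conjTranspose_smul]
    simp
  have hsm₁ : ∀ t : ℝ, (-(Complex.I * (t : ℂ))) • α = (t : ℂ) • c₁ := by
    intro t; rw [hc₁def, smul_smul]; congr 1; ring
  have hsm₂ : ∀ t : ℝ, (Complex.I * (t : ℂ)) • α = (t : ℂ) • c₂ := by
    intro t; rw [hc₂def, smul_smul]; congr 1; ring
  have hg₁ : ∀ t : ℝ, Λ₁ t * (Λ₁ t)ᴴ = G₁ t := by
    intro t
    rw [hΛ₁ t, hsm₁ t, conjTranspose_mul, hexpH₁ t, hG₁def, hA₁def]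
    simp only [Matrix.mul_assoc]
  have hg₂ : ∀ t : ℝ, Λ₂ t * (Λ₂ t)ᴴ = G₂ t := by
    intro t
    rw [hΛ₂ t, hsm₂ t, conjTranspose_mul, hexpH₂ t, hG₂def, hA₂def]
    simp only [Matrix.mul_assoc]
  -- conjTransposes of c₁, c₂
  have hc₁H : c₁ᴴ = Complex.I • αᴴ := by
    rw [hc₁def, conjTranspose_smul]; simp
  have hc₂H : c₂ᴴ = (-Complex.I) • αᴴ := by
    rw [hc₂def, conjTranspose_smul]; simp
  -- the derivative of I • (G₁ - G₂)
  have hD : ∀ t : ℝ, HasDerivAt (fun s => Complex.I • (G₁ s - G₂ s))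
      (α * (G₁ t + G₂ t) - (G₁ t + G₂ t) * αᴴ) t := by
    intro t
    have h : HasDerivAt (fun s => Complex.I • (G₁ s - G₂ s))
        (Complex.I • ((c₁ * G₁ t + G₁ t * c₁ᴴ) - (c₂ * G₂ t + G₂ t * c₂ᴴ))) t :=
      ((conj_hasDerivAt c₁ A₁ t).sub (conj_hasDerivAt c₂ A₂ t)).const_smul Complex.I
    rw [hc₁H, hc₂H, hc₁def, hc₂def, alg_identity α (G₁ t) (G₂ t)] at h
    exact h
  -- continuity
  have hGcont : Continuous fun t : ℝ => G₁ t + G₂ t := by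
    have h1 : Continuous G₁ :=
      continuous_iff_continuousAt.2 fun t => ((conj_hasDerivAt c₁ A₁ t).continuousAt)
    have h2 : Continuous G₂ :=
      continuous_iff_continuousAt.2 fun t => ((conj_hasDerivAt c₂ A₂ t).continuousAt)
    exact h1.add h2
  have hαfcont : Continuous fun t : ℝ => α * (G₁ t + G₂ t) := continuous_const.mul hGcont
  have hfαcont : Continuous fun t : ℝ => (G₁ t + G₂ t) * αᴴ := hGcont.mul continuous_const
  have hint1 : ∀ i k : Fin n, IntervalIntegrable
      (fun t => (α * (G₁ t + G₂ t)) i k) MeasureTheory.volume 0 x :=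
    fun i k => (entry_continuous hαfcont i k).intervalIntegrable _ _
  have hint2 : ∀ i k : Fin n, IntervalIntegrable
      (fun t => ((G₁ t + G₂ t) * αᴴ) i k) MeasureTheory.volume 0 x :=
    fun i k => (entry_continuous hfαcont i k).intervalIntegrable _ _
  -- FTC
  have hFTC : ∀ i k : Fin n,
      (∫ t in (0:ℝ)..x, (α * (G₁ t + G₂ t) - (G₁ t + G₂ t) * αᴴ) i k) =
        (Complex.I • (G₁ x - G₂ x)) i k - (Complex.I • (G₁ 0 - G₂ 0)) i k := by
    intro i k
    refine intervalIntegral.integral_eq_sub_of_hasDerivAt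
      (fun t _ => entry_hasDerivAt (hD t) i k) ?_
    have := ((entry_continuous (hαfcont.sub hfαcont) i k).intervalIntegrable
      (0:ℝ) x (μ := MeasureTheory.volume))
    simpa using this
  -- rewrite S x
  have hSx : S x = S₀ + Matrix.of fun i k => ∫ t in (0:ℝ)..x, (G₁ t + G₂ t) i k := by
    rw [hS x]
    congr 1
    ext i k
    simp only [Matrix.of_apply]
    congr 1
    funext t
    rw [hg₁ t, hg₂ t]
  -- entrywise computation of the multiplication
  have hmulL : ∀ i k : Fin n, (α * (S x - S₀)) i k =
      ∫ t in (0:ℝ)..x, (α * (G₁ t + G₂ t)) i k := by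
    intro i k
    have hSsub : S x - S₀ = Matrix.of fun i k => ∫ t in (0:ℝ)..x, (G₁ t + G₂ t) i k := by
      rw [hSx, add_sub_cancel_left]
    rw [hSsub, Matrix.mul_apply]
    simp only [Matrix.of_apply]
    simp_rw [← intervalIntegral.integral_const_mul]
    rw [← intervalIntegral.integral_finset_sum]
    · exact intervalIntegral.integral_congr fun t _ => (Matrix.mul_apply).symm
    · intro j _
      exact (continuous_const.mul (entry_continuous hGcont j k)).intervalIntegrable _ _
  have hmulR : ∀ i k : Fin n, ((S x - S₀) * αᴴ) i k =
      ∫ t in (0:ℝ)..x, ((G₁ t + G₂ t) * αᴴ) i k := by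
    intro i k
    have hSsub : S x - S₀ = Matrix.of fun i k => ∫ t in (0:ℝ)..x, (G₁ t + G₂ t) i k := by
      rw [hSx, add_sub_cancel_left]
    rw [hSsub, Matrix.mul_apply]
    simp only [Matrix.of_apply]
    simp_rw [← intervalIntegral.integral_mul_const]
    rw [← intervalIntegral.integral_finset_sum]
    · exact intervalIntegral.integral_congr fun t _ => (Matrix.mul_apply).symm
    · intro j _
      exact ((entry_continuous hGcont i j).mul continuous_const).intervalIntegrable _ _
  -- G at 0
  have hG₁0 : G₁ 0 = A₁ := by simp [hG₁def]
  have hG₂0 : G₂ 0 = A₂ := by simp [hG₂def]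
  -- put it together
  rw [hg₁ x, hg₂ x]
  ext i k
  have key : (α * S x - S x * αᴴ) i k =
      (α * S₀ - S₀ * αᴴ) i k +
        ∫ t in (0:ℝ)..x, (α * (G₁ t + G₂ t) - (G₁ t + G₂ t) * αᴴ) i k := by
    have expand : α * S x - S x * αᴴ =
        (α * S₀ - S₀ * αᴴ) + (α * (S x - S₀) - (S x - S₀) * αᴴ) := by
      rw [mul_sub, sub_mul]; abel
    rw [expand]
    simp only [Matrix.add_apply, Matrix.sub_apply]
    rw [hmulL i k, hmulR i k]
    rw [← intervalIntegral.integral_sub (hint1 i k) (hint2 i k)]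
  rw [key, hFTC i k, hid, hG₁0, hG₂0]
  simp only [Matrix.smul_apply, Matrix.sub_apply, hA₁def, hA₂def]
  ring
end

section
/- Let α be an n×n complex matrix, S₀ an invertible Hermitian n×n matrix, γ₁ an n×m₁ matrix and γ an n×m₂ matrix satisfying αS₀ − S₀α* = i(γ₁γ₁* − γγ*). Fix a complex λ with λIₙ − α and λIₙ − α* invertible, and set W₁₁ = I_{m₁} + iγ₁*S₀⁻¹(λIₙ − α)⁻¹γ₁, W₁₂ = iγ₁*S₀⁻¹(λIₙ − α)⁻¹γ, W₂₁ = −iγ*S₀⁻¹(λIₙ − α)⁻¹γ₁, W₂₂ = I_{m₂} − iγ*S₀⁻¹(λIₙ − α)⁻¹γ, as well as Ξ₁ = −iγ₁*(λIₙ − α*)⁻¹S₀⁻¹γ and Ξ₂ = I_{m₂} + iγ*(λIₙ − α*)⁻¹S₀⁻¹γ. Then W₁₁Ξ₁ + W₁₂Ξ₂ = 0 and W₂₁Ξ₁ + W₂₂Ξ₂ = I_{m₂}. -/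
open Matrix

/-- Formulas (2.2)/(2.4): with `αS₀ - S₀αᴴ = i(γ₁γ₁ᴴ - γγᴴ)`, the blocks `W_{kl}` of
`w_α(0,λ)` and `Ξ₁, Ξ₂` satisfy `W₁₁Ξ₁ + W₁₂Ξ₂ = 0` and `W₂₁Ξ₁ + W₂₂Ξ₂ = I`. -/
theorem Xi_boundary_condition
    (n m₁ m₂ : ℕ)
    (α S₀ : Matrix (Fin n) (Fin n) ℂ)
    (hS₀ : S₀.IsHermitian) (hS₀inv : IsUnit S₀)
    (γ₁ : Matrix (Fin n) (Fin m₁) ℂ) (γ : Matrix (Fin n) (Fin m₂) ℂ)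
    (hid : α * S₀ - S₀ * αᴴ = Complex.I • (γ₁ * γ₁ᴴ - γ * γᴴ))
    (l : ℂ)
    (h₁ : IsUnit (l • (1 : Matrix (Fin n) (Fin n) ℂ) - α))
    (h₂ : IsUnit (l • (1 : Matrix (Fin n) (Fin n) ℂ) - αᴴ))
    (W₁₁ : Matrix (Fin m₁) (Fin m₁) ℂ) (W₁₂ : Matrix (Fin m₁) (Fin m₂) ℂ)
    (W₂₁ : Matrix (Fin m₂) (Fin m₁) ℂ) (W₂₂ : Matrix (Fin m₂) (Fin m₂) ℂ)
    (Ξ₁ : Matrix (Fin m₁) (Fin m₂) ℂ) (Ξ₂ : Matrix (Fin m₂) (Fin m₂) ℂ)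
    (hW₁₁ : W₁₁ = 1 + Complex.I •
      (γ₁ᴴ * S₀⁻¹ * (l • (1 : Matrix (Fin n) (Fin n) ℂ) - α)⁻¹ * γ₁))
    (hW₁₂ : W₁₂ = Complex.I •
      (γ₁ᴴ * S₀⁻¹ * (l • (1 : Matrix (Fin n) (Fin n) ℂ) - α)⁻¹ * γ))
    (hW₂₁ : W₂₁ = -(Complex.I •
      (γᴴ * S₀⁻¹ * (l • (1 : Matrix (Fin n) (Fin n) ℂ) - α)⁻¹ * γ₁)))
    (hW₂₂ : W₂₂ = 1 - Complex.I •
      (γᴴ * S₀⁻¹ * (l • (1 : Matrix (Fin n) (Fin n) ℂ) - α)⁻¹ * γ))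
    (hΞ₁ : Ξ₁ = -(Complex.I •
      (γ₁ᴴ * (l • (1 : Matrix (Fin n) (Fin n) ℂ) - αᴴ)⁻¹ * S₀⁻¹ * γ)))
    (hΞ₂ : Ξ₂ = 1 + Complex.I •
      (γᴴ * (l • (1 : Matrix (Fin n) (Fin n) ℂ) - αᴴ)⁻¹ * S₀⁻¹ * γ)) :
    W₁₁ * Ξ₁ + W₁₂ * Ξ₂ = 0 ∧ W₂₁ * Ξ₁ + W₂₂ * Ξ₂ = 1 := by
  set E : Matrix (Fin n) (Fin n) ℂ := l • (1 : Matrix (Fin n) (Fin n) ℂ) - α with hE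
  set F : Matrix (Fin n) (Fin n) ℂ := l • (1 : Matrix (Fin n) (Fin n) ℂ) - αᴴ with hF
  have hdS : IsUnit S₀.det := (Matrix.isUnit_iff_isUnit_det S₀).mp hS₀inv
  have hdE : IsUnit E.det := (Matrix.isUnit_iff_isUnit_det E).mp h₁
  have hdF : IsUnit F.det := (Matrix.isUnit_iff_isUnit_det F).mp h₂
  have hEF : S₀ * F - E * S₀ = Complex.I • (γ₁ * γ₁ᴴ - γ * γᴴ) := by
    rw [← hid, hE, hF]
    simp only [Matrix.mul_sub, Matrix.sub_mul, Matrix.mul_smul, Matrix.smul_mul,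
      Matrix.mul_one, Matrix.one_mul]
    abel
  have K : S₀⁻¹ * (E⁻¹ * ((Complex.I • (γ₁ * γ₁ᴴ - γ * γᴴ)) * (F⁻¹ * S₀⁻¹)))
      = S₀⁻¹ * E⁻¹ - F⁻¹ * S₀⁻¹ := by
    rw [← hEF]
    simp only [Matrix.sub_mul, Matrix.mul_sub, Matrix.mul_assoc,
      Matrix.mul_nonsing_inv_cancel_left _ _ hdF,
      Matrix.nonsing_inv_mul_cancel_left _ _ hdE,
      Matrix.mul_nonsing_inv_cancel_left _ _ hdS,
      Matrix.nonsing_inv_mul_cancel_left _ _ hdS,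
      Matrix.mul_nonsing_inv _ hdS, Matrix.mul_one]
  have K' : S₀⁻¹ * (E⁻¹ * ((γ₁ * γ₁ᴴ - γ * γᴴ) * (F⁻¹ * S₀⁻¹)))
      = (-Complex.I) • (S₀⁻¹ * E⁻¹ - F⁻¹ * S₀⁻¹) := by
    rw [← K]
    simp only [Matrix.smul_mul, Matrix.mul_smul, smul_smul]
    rw [show (-Complex.I) * Complex.I = 1 by simp [Complex.I_mul_I]]
    simp
  constructor
  · subst hW₁₁ hW₁₂ hΞ₁ hΞ₂
    simp only [Matrix.mul_add, Matrix.add_mul, Matrix.mul_smul, Matrix.smul_mul,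
      Matrix.mul_one, Matrix.one_mul, Matrix.mul_neg, Matrix.neg_mul, smul_smul,
      Complex.I_mul_I, neg_smul, one_smul, smul_neg, Matrix.mul_assoc, neg_neg,
      smul_add, smul_sub, neg_one_smul]
    have h := congrArg (fun M => γ₁ᴴ * (M * γ)) K'
    simp only [Matrix.sub_mul, Matrix.mul_sub, Matrix.smul_mul, Matrix.mul_smul,
      smul_sub, Matrix.mul_assoc, neg_smul, Matrix.mul_neg, Matrix.neg_mul] at h
    rw [sub_eq_iff_eq_add] at h
    rw [h]
    module
  · subst hW₂₁ hW₂₂ hΞ₁ hΞ₂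
    simp only [Matrix.mul_add, Matrix.add_mul, Matrix.sub_mul, Matrix.mul_sub,
      Matrix.mul_smul, Matrix.smul_mul,
      Matrix.mul_one, Matrix.one_mul, Matrix.mul_neg, Matrix.neg_mul, smul_smul,
      Complex.I_mul_I, neg_smul, one_smul, smul_neg, Matrix.mul_assoc, neg_neg,
      smul_add, smul_sub, neg_one_smul]
    have h := congrArg (fun M => γᴴ * (M * γ)) K'
    simp only [Matrix.sub_mul, Matrix.mul_sub, Matrix.smul_mul, Matrix.mul_smul,
      smul_sub, Matrix.mul_assoc, neg_smul, Matrix.mul_neg, Matrix.neg_mul] at h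
    rw [sub_eq_iff_eq_add] at h
    rw [h]
    module
end

section
/- Let α and κ be n×n complex matrices and γ an n×m₂ complex matrix satisfying κα − α*κ + iκγγ*κ = 0. For every complex λ such that λIₙ − α and λIₙ − α* are invertible, the matrix χ(λ) = I_{m₂} − iγ*κ(λIₙ − α)⁻¹γ is invertible with inverse χ(λ)⁻¹ = I_{m₂} + iγ*(λIₙ − α*)⁻¹κγ; that is, both products of these two matrices equal I_{m₂}. -/
open Matrix

/-- Identity (2.7''): if `κα - αᴴκ + iκγγᴴκ = 0`, then
`χ(λ) = I - iγᴴκ(λI - α)⁻¹γ` is invertible with inverse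
`I + iγᴴ(λI - αᴴ)⁻¹κγ` (both products equal the identity). -/
theorem chi_inverse_formula
    (n m₂ : ℕ)
    (α κ : Matrix (Fin n) (Fin n) ℂ)
    (γ : Matrix (Fin n) (Fin m₂) ℂ)
    (hid : κ * α - αᴴ * κ + Complex.I • (κ * γ * γᴴ * κ) = 0)
    (l : ℂ)
    (h₁ : IsUnit (l • (1 : Matrix (Fin n) (Fin n) ℂ) - α))
    (h₂ : IsUnit (l • (1 : Matrix (Fin n) (Fin n) ℂ) - αᴴ)) :
    (1 - Complex.I • (γᴴ * κ * (l • (1 : Matrix (Fin n) (Fin n) ℂ) - α)⁻¹ * γ)) *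
      (1 + Complex.I • (γᴴ * (l • (1 : Matrix (Fin n) (Fin n) ℂ) - αᴴ)⁻¹ * κ * γ)) = 1 ∧
    (1 + Complex.I • (γᴴ * (l • (1 : Matrix (Fin n) (Fin n) ℂ) - αᴴ)⁻¹ * κ * γ)) *
      (1 - Complex.I • (γᴴ * κ * (l • (1 : Matrix (Fin n) (Fin n) ℂ) - α)⁻¹ * γ)) = 1 := by
  set A : Matrix (Fin n) (Fin n) ℂ := l • (1 : Matrix (Fin n) (Fin n) ℂ) - α with hA
  set B : Matrix (Fin n) (Fin n) ℂ := l • (1 : Matrix (Fin n) (Fin n) ℂ) - αᴴ with hB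
  have hAdet : IsUnit A.det := (Matrix.isUnit_iff_isUnit_det A).mp h₁
  have hBdet : IsUnit B.det := (Matrix.isUnit_iff_isUnit_det B).mp h₂
  have hAinv' : A * A⁻¹ = 1 := Matrix.mul_nonsing_inv A hAdet
  have hBinv : B⁻¹ * B = 1 := Matrix.nonsing_inv_mul B hBdet
  have h2 : κ * α - αᴴ * κ = -(Complex.I • (κ * γ * γᴴ * κ)) :=
    eq_neg_of_add_eq_zero_left hid
  have key : κ * A - B * κ = Complex.I • (κ * γ * γᴴ * κ) := by
    have h3 : κ * A - B * κ = -(κ * α - αᴴ * κ) := by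
      rw [hA, hB]
      rw [Matrix.mul_sub, Matrix.sub_mul, Matrix.mul_smul, Matrix.smul_mul,
        Matrix.mul_one, Matrix.one_mul]
      abel
    rw [h3, h2, neg_neg]
  have D : B⁻¹ * κ - κ * A⁻¹ = Complex.I • (B⁻¹ * (κ * γ * γᴴ * κ) * A⁻¹) := by
    have e : B⁻¹ * (κ * A - B * κ) * A⁻¹ = B⁻¹ * κ - κ * A⁻¹ := by
      rw [Matrix.mul_sub, Matrix.sub_mul]
      congr 1
      · simp only [Matrix.mul_assoc]
        rw [hAinv', Matrix.mul_one]
      · rw [← Matrix.mul_assoc B⁻¹ B κ, hBinv, Matrix.one_mul]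
    rw [← e, key, Matrix.mul_smul, Matrix.smul_mul]
  set P : Matrix (Fin m₂) (Fin m₂) ℂ := γᴴ * B⁻¹ * κ * γ with hP
  set Q : Matrix (Fin m₂) (Fin m₂) ℂ := γᴴ * κ * A⁻¹ * γ with hQ
  have S : P - Q = Complex.I • (P * Q) := by
    have hPQ : P * Q = γᴴ * (B⁻¹ * (κ * γ * γᴴ * κ) * A⁻¹) * γ := by
      rw [hP, hQ]; simp only [Matrix.mul_assoc]
    have hsub : P - Q = γᴴ * (B⁻¹ * κ - κ * A⁻¹) * γ := by
      rw [hP, hQ, Matrix.mul_sub, Matrix.sub_mul]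
      simp only [Matrix.mul_assoc]
    rw [hsub, D, Matrix.mul_smul, Matrix.smul_mul, hPQ]
  have goal2 : (1 + Complex.I • P) * (1 - Complex.I • Q) = 1 := by
    have e1 : (1 + Complex.I • P) * (1 - Complex.I • Q)
        = 1 + Complex.I • (P - Q) + P * Q := by
      rw [mul_sub, mul_one, add_mul, one_mul, Matrix.smul_mul, Matrix.mul_smul,
        smul_smul, Complex.I_mul_I, neg_one_smul, smul_sub]
      abel
    rw [e1, S, smul_smul, Complex.I_mul_I, neg_one_smul]
    abel
  refine ⟨?_, goal2⟩
  exact mul_eq_one_comm.mpr goal2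
end

section
/- Let α be an n×n complex matrix, S₀ an invertible Hermitian n×n matrix, γ₁ an n×m₁ matrix and γ an n×m₂ matrix satisfying αS₀ − S₀α* = i(γ₁γ₁* − γγ*), and set θ = α − iγ₁γ₁*S₀⁻¹. For every complex λ such that λIₙ − α* and λIₙ − θ are invertible, the matrix Ξ₂(λ) = I_{m₂} + iγ*(λIₙ − α*)⁻¹S₀⁻¹γ is invertible with inverse Ξ₂(λ)⁻¹ = I_{m₂} − iγ*S₀⁻¹(λIₙ − θ)⁻¹γ; that is, both products of these two matrices equal I_{m₂}. -/
open Matrix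

/-- Identity (n3.2): with `αS₀ - S₀αᴴ = i(γ₁γ₁ᴴ - γγᴴ)` and `θ = α - iγ₁γ₁ᴴS₀⁻¹`,
the matrix `Ξ₂(λ) = I + iγᴴ(λI - αᴴ)⁻¹S₀⁻¹γ` is invertible with inverse
`I - iγᴴS₀⁻¹(λI - θ)⁻¹γ` (both products equal the identity). -/
theorem Xi2_inverse_formula
    (n m₁ m₂ : ℕ)
    (α S₀ : Matrix (Fin n) (Fin n) ℂ)
    (hS₀ : S₀.IsHermitian) (hS₀inv : IsUnit S₀)
    (γ₁ : Matrix (Fin n) (Fin m₁) ℂ) (γ : Matrix (Fin n) (Fin m₂) ℂ)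
    (hid : α * S₀ - S₀ * αᴴ = Complex.I • (γ₁ * γ₁ᴴ - γ * γᴴ))
    (θ : Matrix (Fin n) (Fin n) ℂ)
    (hθ : θ = α - Complex.I • (γ₁ * γ₁ᴴ * S₀⁻¹))
    (l : ℂ)
    (h₁ : IsUnit (l • (1 : Matrix (Fin n) (Fin n) ℂ) - αᴴ))
    (h₂ : IsUnit (l • (1 : Matrix (Fin n) (Fin n) ℂ) - θ)) :
    (1 + Complex.I • (γᴴ * (l • (1 : Matrix (Fin n) (Fin n) ℂ) - αᴴ)⁻¹ * S₀⁻¹ * γ)) *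
      (1 - Complex.I • (γᴴ * S₀⁻¹ * (l • (1 : Matrix (Fin n) (Fin n) ℂ) - θ)⁻¹ * γ)) = 1 ∧
    (1 - Complex.I • (γᴴ * S₀⁻¹ * (l • (1 : Matrix (Fin n) (Fin n) ℂ) - θ)⁻¹ * γ)) *
      (1 + Complex.I • (γᴴ * (l • (1 : Matrix (Fin n) (Fin n) ℂ) - αᴴ)⁻¹ * S₀⁻¹ * γ)) = 1 := by
  set X : Matrix (Fin n) (Fin n) ℂ := l • (1 : Matrix (Fin n) (Fin n) ℂ) - αᴴ with hXdef
  set Y : Matrix (Fin n) (Fin n) ℂ := l • (1 : Matrix (Fin n) (Fin n) ℂ) - θ with hYdef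
  have hXd : IsUnit X.det := (Matrix.isUnit_iff_isUnit_det _).mp h₁
  have hYd : IsUnit Y.det := (Matrix.isUnit_iff_isUnit_det _).mp h₂
  have hSd : IsUnit S₀.det := (Matrix.isUnit_iff_isUnit_det _).mp hS₀inv
  have hXX : X⁻¹ * X = 1 := Matrix.nonsing_inv_mul _ hXd
  have hXX' : X * X⁻¹ = 1 := Matrix.mul_nonsing_inv _ hXd
  have hYY : Y * Y⁻¹ = 1 := Matrix.mul_nonsing_inv _ hYd
  have hSS : S₀⁻¹ * S₀ = 1 := Matrix.nonsing_inv_mul _ hSd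
  have hSS' : S₀ * S₀⁻¹ = 1 := Matrix.mul_nonsing_inv _ hSd
  -- θ S₀ = α S₀ - i γ₁ γ₁ᴴ
  have hθS : θ * S₀ = α * S₀ - Complex.I • (γ₁ * γ₁ᴴ) := by
    rw [hθ, sub_mul, smul_mul_assoc, mul_assoc, Matrix.nonsing_inv_mul _ hSd, mul_one]
  -- α S₀ in terms of the rest
  have hαS : α * S₀ = S₀ * αᴴ + Complex.I • (γ₁ * γ₁ᴴ) - Complex.I • (γ * γᴴ) := by
    rw [smul_sub] at hid
    have := sub_eq_iff_eq_add.mp hid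
    rw [this]; abel
  -- Key relation: S₀ X = Y S₀ - i γ γᴴ
  have hYS : S₀ * X = Y * S₀ - Complex.I • (γ * γᴴ) := by
    rw [hXdef, hYdef, mul_sub, sub_mul, hθS, hαS, mul_smul_comm, mul_one,
      smul_mul_assoc, one_mul]
    abel
  -- Key identity (n3.1 consequence): S₀⁻¹ Y⁻¹ = X⁻¹ S₀⁻¹ - i X⁻¹ S₀⁻¹ γγᴴ S₀⁻¹ Y⁻¹
  have hK : X⁻¹ * S₀⁻¹ - S₀⁻¹ * Y⁻¹
      = Complex.I • (X⁻¹ * S₀⁻¹ * (γ * γᴴ) * (S₀⁻¹ * Y⁻¹)) := by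
    have h := congrArg (fun M => X⁻¹ * S₀⁻¹ * M * (S₀⁻¹ * Y⁻¹)) hYS
    have hL : X⁻¹ * S₀⁻¹ * (S₀ * X) * (S₀⁻¹ * Y⁻¹) = S₀⁻¹ * Y⁻¹ := by
      simp only [mul_assoc]
      rw [Matrix.nonsing_inv_mul_cancel_left _ _ hSd,
        Matrix.nonsing_inv_mul_cancel_left _ _ hXd]
    have hR : X⁻¹ * S₀⁻¹ * (Y * S₀ - Complex.I • (γ * γᴴ)) * (S₀⁻¹ * Y⁻¹)
        = X⁻¹ * S₀⁻¹ - Complex.I • (X⁻¹ * S₀⁻¹ * (γ * γᴴ) * (S₀⁻¹ * Y⁻¹)) := by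
      simp only [mul_sub, sub_mul, mul_smul_comm, smul_mul_assoc, mul_assoc]
      rw [Matrix.mul_nonsing_inv_cancel_left _ _ hSd, hYY, mul_one]
    rw [hL, hR] at h
    conv_lhs => rw [h]
    rw [sub_sub_cancel]
  -- abbreviations
  set P : Matrix (Fin m₂) (Fin m₂) ℂ := γᴴ * X⁻¹ * S₀⁻¹ * γ with hP
  set Q : Matrix (Fin m₂) (Fin m₂) ℂ := γᴴ * S₀⁻¹ * Y⁻¹ * γ with hQ
  -- the sandwiched key identity:  I•(P - Q) = -(P * Q)
  have hPQ : Complex.I • (P - Q) = -(P * Q) := by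
    have h1 : P - Q = γᴴ * (X⁻¹ * S₀⁻¹ - S₀⁻¹ * Y⁻¹) * γ := by
      rw [Matrix.mul_sub, Matrix.sub_mul, hP, hQ]
      simp only [Matrix.mul_assoc]
    have h2 : γᴴ * (Complex.I • (X⁻¹ * S₀⁻¹ * (γ * γᴴ) * (S₀⁻¹ * Y⁻¹))) * γ
        = Complex.I • (P * Q) := by
      rw [Matrix.mul_smul, Matrix.smul_mul]
      congr 1
      rw [hP, hQ]
      simp only [Matrix.mul_assoc]
    rw [h1, hK, h2, smul_smul, Complex.I_mul_I, neg_one_smul]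
  have main : (1 + Complex.I • P) * (1 - Complex.I • Q) = 1 := by
    have hexp : (1 + Complex.I • P) * (1 - Complex.I • Q)
        = 1 + Complex.I • (P - Q) + P * Q := by
      rw [add_mul, mul_sub, mul_sub, one_mul, one_mul, mul_one,
        smul_mul_smul_comm, Complex.I_mul_I, neg_one_smul, smul_sub]
      abel
    rw [hexp, hPQ]; abel
  exact ⟨main, mul_eq_one_comm.mp main⟩
end

section
/- Let α be an n×n complex matrix, S₀ an invertible Hermitian n×n matrix, γ₁ an n×m₁ matrix and γ an n×m₂ matrix satisfying αS₀ − S₀α* = i(γ₁γ₁* − γγ*), and set θ = α − iγ₁γ₁*S₀⁻¹. For every complex λ such that λIₙ − α* and λIₙ − θ are invertible, with Ξ₁(λ) = −iγ₁*(λIₙ − α*)⁻¹S₀⁻¹γ and Ξ₂(λ) = I_{m₂} + iγ*(λIₙ − α*)⁻¹S₀⁻¹γ, one has Ξ₁(λ) = (−iγ₁*S₀⁻¹(λIₙ − θ)⁻¹γ) · Ξ₂(λ); equivalently, since Ξ₂(λ) is invertible, Ξ₁(λ)Ξ₂(λ)⁻¹ = −iγ₁*S₀⁻¹(λIₙ −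 θ)⁻¹γ. -/
open Matrix

/-- Identity (n3.4): with `αS₀ - S₀αᴴ = i(γ₁γ₁ᴴ - γγᴴ)` and `θ = α - iγ₁γ₁ᴴS₀⁻¹`,
one has `Ξ₁(λ) = (-iγ₁ᴴS₀⁻¹(λI - θ)⁻¹γ) Ξ₂(λ)`, equivalently
`Ξ₁(λ)Ξ₂(λ)⁻¹ = -iγ₁ᴴS₀⁻¹(λI - θ)⁻¹γ`. -/
theorem Xi1_Xi2_ratio_formula
    (n m₁ m₂ : ℕ)
    (α S₀ : Matrix (Fin n) (Fin n) ℂ)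
    (hS₀ : S₀.IsHermitian) (hS₀inv : IsUnit S₀)
    (γ₁ : Matrix (Fin n) (Fin m₁) ℂ) (γ : Matrix (Fin n) (Fin m₂) ℂ)
    (hid : α * S₀ - S₀ * αᴴ = Complex.I • (γ₁ * γ₁ᴴ - γ * γᴴ))
    (θ : Matrix (Fin n) (Fin n) ℂ)
    (hθ : θ = α - Complex.I • (γ₁ * γ₁ᴴ * S₀⁻¹))
    (l : ℂ)
    (h₁ : IsUnit (l • (1 : Matrix (Fin n) (Fin n) ℂ) - αᴴ))
    (h₂ : IsUnit (l • (1 : Matrix (Fin n) (Fin n) ℂ) - θ))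
    (Ξ₁ : Matrix (Fin m₁) (Fin m₂) ℂ) (Ξ₂ : Matrix (Fin m₂) (Fin m₂) ℂ)
    (hΞ₁ : Ξ₁ = -(Complex.I •
      (γ₁ᴴ * (l • (1 : Matrix (Fin n) (Fin n) ℂ) - αᴴ)⁻¹ * S₀⁻¹ * γ)))
    (hΞ₂ : Ξ₂ = 1 + Complex.I •
      (γᴴ * (l • (1 : Matrix (Fin n) (Fin n) ℂ) - αᴴ)⁻¹ * S₀⁻¹ * γ)) :
    Ξ₁ = (-(Complex.I •
        (γ₁ᴴ * S₀⁻¹ * (l • (1 : Matrix (Fin n) (Fin n) ℂ) - θ)⁻¹ * γ))) * Ξ₂ ∧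
    Ξ₁ * Ξ₂⁻¹ = -(Complex.I •
      (γ₁ᴴ * S₀⁻¹ * (l • (1 : Matrix (Fin n) (Fin n) ℂ) - θ)⁻¹ * γ)) := by
  set A := l • (1 : Matrix (Fin n) (Fin n) ℂ) - αᴴ with hAdef
  set B := l • (1 : Matrix (Fin n) (Fin n) ℂ) - θ with hBdef
  have hSd : IsUnit S₀.det := (Matrix.isUnit_iff_isUnit_det _).mp hS₀inv
  have hAd : IsUnit A.det := (Matrix.isUnit_iff_isUnit_det _).mp h₁
  have hBd : IsUnit B.det := (Matrix.isUnit_iff_isUnit_det _).mp h₂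
  have hS1 : S₀⁻¹ * S₀ = 1 := Matrix.nonsing_inv_mul _ hSd
  have hS2 : S₀ * S₀⁻¹ = 1 := Matrix.mul_nonsing_inv _ hSd
  have hA1 : A⁻¹ * A = 1 := Matrix.nonsing_inv_mul _ hAd
  have hA2 : A * A⁻¹ = 1 := Matrix.mul_nonsing_inv _ hAd
  have hB1 : B⁻¹ * B = 1 := Matrix.nonsing_inv_mul _ hBd
  have hB2 : B * B⁻¹ = 1 := Matrix.mul_nonsing_inv _ hBd
  -- key identity (n3.3)
  have key : Complex.I • (γ * γᴴ) = B * S₀ - S₀ * A := by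
    have hθS : θ * S₀ = α * S₀ - Complex.I • (γ₁ * γ₁ᴴ) := by
      rw [hθ, sub_mul, Matrix.smul_mul, mul_assoc, hS1, mul_one]
    have hαS : α * S₀ = S₀ * αᴴ + (Complex.I • (γ₁ * γ₁ᴴ) - Complex.I • (γ * γᴴ)) := by
      rw [← smul_sub, ← hid]; abel
    rw [hBdef, hAdef, sub_mul, mul_sub, hθS, hαS]
    simp only [Matrix.smul_mul, Matrix.mul_smul, one_mul, mul_one]
    abel
  set X := A⁻¹ * (S₀⁻¹ * γ) with hXdef
  have hSAX : S₀ * (A * X) = γ := by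
    rw [hXdef, ← Matrix.mul_assoc A, hA2, Matrix.one_mul, ← Matrix.mul_assoc, hS2,
      Matrix.one_mul]
  have claim : γ + Complex.I • (γ * (γᴴ * X)) = B * (S₀ * X) := by
    have h1 : Complex.I • (γ * (γᴴ * X)) = (Complex.I • (γ * γᴴ)) * X := by
      rw [Matrix.smul_mul, Matrix.mul_assoc]
    rw [h1, key, Matrix.sub_mul (B * S₀) (S₀ * A) X, Matrix.mul_assoc B,
      Matrix.mul_assoc S₀, hSAX]
    abel
  have main : Ξ₁ = -(Complex.I •
      (γ₁ᴴ * S₀⁻¹ * B⁻¹ * γ)) * Ξ₂ := by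
    have hγE : γ * Ξ₂ = B * (S₀ * X) := by
      rw [hΞ₂, Matrix.mul_add, Matrix.mul_one, ← claim]
      congr 1
      rw [Matrix.mul_smul]
      congr 1
      simp only [Matrix.mul_assoc, hXdef]
    calc Ξ₁ = -(Complex.I • (γ₁ᴴ * X)) := by
            rw [hΞ₁]; simp only [hXdef, Matrix.mul_assoc]
      _ = -(Complex.I • (γ₁ᴴ * (S₀⁻¹ * (B⁻¹ * (γ * Ξ₂))))) := by
            rw [hγE, ← Matrix.mul_assoc B⁻¹, hB1, Matrix.one_mul,
              ← Matrix.mul_assoc S₀⁻¹, hS1, Matrix.one_mul]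
      _ = -(Complex.I • (γ₁ᴴ * S₀⁻¹ * B⁻¹ * γ)) * Ξ₂ := by
            simp only [Matrix.neg_mul, Matrix.smul_mul, Matrix.mul_assoc]
  have hΞ₂u : IsUnit Ξ₂.det := by
    have e1 : Ξ₂ = 1 + γᴴ * (Complex.I • (A⁻¹ * (S₀⁻¹ * γ))) := by
      rw [hΞ₂]; congr 1
      rw [Matrix.mul_smul]; simp only [Matrix.mul_assoc]
    have e3 : (1 : Matrix (Fin n) (Fin n) ℂ) + (Complex.I • (A⁻¹ * (S₀⁻¹ * γ))) * γᴴ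
        = A⁻¹ * (S₀⁻¹ * (B * S₀)) := by
      have h4 : (Complex.I • (A⁻¹ * (S₀⁻¹ * γ))) * γᴴ
          = A⁻¹ * (S₀⁻¹ * (Complex.I • (γ * γᴴ))) := by
        simp only [Matrix.smul_mul, Matrix.mul_smul, Matrix.mul_assoc]
      have h5 : S₀⁻¹ * (B * S₀ - S₀ * A) = S₀⁻¹ * (B * S₀) - A := by
        rw [Matrix.mul_sub, ← Matrix.mul_assoc S₀⁻¹ S₀ A, hS1, Matrix.one_mul]
      rw [h4, key, h5, Matrix.mul_sub, hA1]
      abel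
    have hdAi : IsUnit (A⁻¹).det :=
      IsUnit.of_mul_eq_one A.det (by rw [← Matrix.det_mul, hA1, Matrix.det_one])
    have hdSi : IsUnit (S₀⁻¹).det :=
      IsUnit.of_mul_eq_one S₀.det (by rw [← Matrix.det_mul, hS1, Matrix.det_one])
    rw [e1, Matrix.det_one_add_mul_comm, e3, Matrix.det_mul, Matrix.det_mul, Matrix.det_mul]
    exact hdAi.mul (hdSi.mul (hBd.mul hSd))
  refine ⟨main, ?_⟩
  rw [main, Matrix.mul_assoc, Matrix.mul_nonsing_inv _ hΞ₂u, Matrix.mul_one]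
end

section
/- Let α and κ be n×n complex matrices, S₀ an invertible Hermitian n×n matrix, γ₁ an n×m₁ matrix and γ an n×m₂ matrix satisfying αS₀ − S₀α* = i(γ₁γ₁* − γγ*) and κα − α*κ + iκγγ*κ = 0, and set θ = α − iγ₁γ₁*S₀⁻¹. Fix a complex λ such that λIₙ − α, λIₙ − α* and λIₙ − θ are invertible, so that χ(λ) = I_{m₂} − iγ*κ(λIₙ − α)⁻¹γ is invertible with χ(λ)⁻¹ = I_{m₂} + iγ*(λIₙ − α*)⁻¹κγ. Then: (a) (I_{m₂} − iγ*S₀⁻¹(λIₙ − θ)⁻¹γ) · χ(λ)⁻¹ = I_{m₂} − iγ*S₀⁻¹(λIₙ − θ)⁻¹(Iₙ − S₀κ)γ; and (b) (−iγ₁*S₀⁻¹(λIₙ − θ)⁻¹γ) · χ(λ)⁻¹ = −iγ₁*S₀⁻¹(λIₙ − θ)⁻¹(Iₙ − S₀κ)γ − iγ₁*(λIₙ − α*)⁻¹κγ. -/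
open Matrix

set_option maxHeartbeats 1600000 in
/-- Formulas (2.10)/(2.11): explicit right transmission and reflection coefficients.
With `αS₀ - S₀αᴴ = i(γ₁γ₁ᴴ - γγᴴ)`, `κα - αᴴκ + iκγγᴴκ = 0`, `θ = α - iγ₁γ₁ᴴS₀⁻¹`
and `χ(λ)⁻¹ = I + iγᴴ(λI - αᴴ)⁻¹κγ`:
(a) `(I - iγᴴS₀⁻¹(λI - θ)⁻¹γ)χ(λ)⁻¹ = I - iγᴴS₀⁻¹(λI - θ)⁻¹(I - S₀κ)γ`;
(b) `(-iγ₁ᴴS₀⁻¹(λI - θ)⁻¹γ)χ(λ)⁻¹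
      = -iγ₁ᴴS₀⁻¹(λI - θ)⁻¹(I - S₀κ)γ - iγ₁ᴴ(λI - αᴴ)⁻¹κγ`. -/
theorem right_coefficients_formulas
    (n m₁ m₂ : ℕ)
    (α κ S₀ : Matrix (Fin n) (Fin n) ℂ)
    (hS₀ : S₀.IsHermitian) (hS₀inv : IsUnit S₀)
    (γ₁ : Matrix (Fin n) (Fin m₁) ℂ) (γ : Matrix (Fin n) (Fin m₂) ℂ)
    (hid : α * S₀ - S₀ * αᴴ = Complex.I • (γ₁ * γ₁ᴴ - γ * γᴴ))
    (hκ : κ * α - αᴴ * κ + Complex.I • (κ * γ * γᴴ * κ) = 0)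
    (θ : Matrix (Fin n) (Fin n) ℂ)
    (hθ : θ = α - Complex.I • (γ₁ * γ₁ᴴ * S₀⁻¹))
    (l : ℂ)
    (h₁ : IsUnit (l • (1 : Matrix (Fin n) (Fin n) ℂ) - α))
    (h₂ : IsUnit (l • (1 : Matrix (Fin n) (Fin n) ℂ) - αᴴ))
    (h₃ : IsUnit (l • (1 : Matrix (Fin n) (Fin n) ℂ) - θ)) :
    (1 - Complex.I • (γᴴ * S₀⁻¹ * (l • (1 : Matrix (Fin n) (Fin n) ℂ) - θ)⁻¹ * γ)) *
      (1 + Complex.I • (γᴴ * (l • (1 : Matrix (Fin n) (Fin n) ℂ) - αᴴ)⁻¹ * κ * γ)) =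
    1 - Complex.I • (γᴴ * S₀⁻¹ * (l • (1 : Matrix (Fin n) (Fin n) ℂ) - θ)⁻¹ *
      ((1 : Matrix (Fin n) (Fin n) ℂ) - S₀ * κ) * γ) ∧
    (-(Complex.I • (γ₁ᴴ * S₀⁻¹ * (l • (1 : Matrix (Fin n) (Fin n) ℂ) - θ)⁻¹ * γ))) *
      (1 + Complex.I • (γᴴ * (l • (1 : Matrix (Fin n) (Fin n) ℂ) - αᴴ)⁻¹ * κ * γ)) =
    -(Complex.I • (γ₁ᴴ * S₀⁻¹ * (l • (1 : Matrix (Fin n) (Fin n) ℂ) - θ)⁻¹ *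
      ((1 : Matrix (Fin n) (Fin n) ℂ) - S₀ * κ) * γ)) -
    Complex.I • (γ₁ᴴ * (l • (1 : Matrix (Fin n) (Fin n) ℂ) - αᴴ)⁻¹ * κ * γ) := by

  have hdM : IsUnit (l • (1 : Matrix (Fin n) (Fin n) ℂ) - θ).det :=
    (Matrix.isUnit_iff_isUnit_det _).mp h₃
  have hdN : IsUnit (l • (1 : Matrix (Fin n) (Fin n) ℂ) - αᴴ).det :=
    (Matrix.isUnit_iff_isUnit_det _).mp h₂
  have hdS : IsUnit S₀.det := (Matrix.isUnit_iff_isUnit_det _).mp hS₀inv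
  set M : Matrix (Fin n) (Fin n) ℂ := l • (1 : Matrix (Fin n) (Fin n) ℂ) - θ with hMdef
  set N : Matrix (Fin n) (Fin n) ℂ := l • (1 : Matrix (Fin n) (Fin n) ℂ) - αᴴ with hNdef
  clear_value M N
  have cN : ∀ X : Matrix (Fin n) (Fin m₂) ℂ, N * (N⁻¹ * X) = X := fun X =>
    Matrix.mul_nonsing_inv_cancel_left N X hdN
  have cM : ∀ X : Matrix (Fin n) (Fin m₂) ℂ, M⁻¹ * (M * X) = X := fun X =>
    Matrix.nonsing_inv_mul_cancel_left M X hdM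
  have cS : ∀ X : Matrix (Fin n) (Fin m₂) ℂ, S₀⁻¹ * (S₀ * X) = X := fun X =>
    Matrix.nonsing_inv_mul_cancel_left S₀ X hdS
  have hid' : S₀ * αᴴ = α * S₀ - Complex.I • (γ₁ * γ₁ᴴ - γ * γᴴ) := by
    rw [← hid]; abel
  have hθS : θ * S₀ = α * S₀ - Complex.I • (γ₁ * γ₁ᴴ) := by
    rw [hθ, sub_mul, Matrix.smul_mul, Matrix.mul_assoc, Matrix.nonsing_inv_mul S₀ hdS,
      mul_one]
  have hstar : γ * γᴴ = Complex.I • (S₀ * N) - Complex.I • (M * S₀) := by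
    rw [hNdef, hMdef, mul_sub, sub_mul, Matrix.mul_smul, Matrix.smul_mul, mul_one,
      one_mul, hid', hθS]
    simp only [smul_sub, smul_smul, Complex.I_mul_I, neg_one_smul, sub_neg_eq_add]
    abel
  have hcore : S₀⁻¹ * (M⁻¹ * (γ * (γᴴ * (N⁻¹ * (κ * γ))))) =
      Complex.I • (S₀⁻¹ * (M⁻¹ * (S₀ * (κ * γ)))) - Complex.I • (N⁻¹ * (κ * γ)) := by
    have h1 : γ * (γᴴ * (N⁻¹ * (κ * γ))) = (γ * γᴴ) * (N⁻¹ * (κ * γ)) :=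
      (Matrix.mul_assoc _ _ _).symm
    rw [h1, hstar]
    simp only [Matrix.sub_mul, Matrix.smul_mul, Matrix.mul_sub, Matrix.mul_smul,
      smul_sub, Matrix.mul_assoc, cN, cM, cS]
  constructor
  · simp only [Matrix.mul_add, Matrix.add_mul, Matrix.sub_mul, Matrix.mul_sub,
      Matrix.mul_one, Matrix.one_mul, Matrix.mul_smul, Matrix.smul_mul, smul_smul,
      Complex.I_mul_I, neg_one_smul, smul_sub, smul_add, Matrix.mul_assoc]
    rw [hcore]
    simp only [Matrix.mul_sub, Matrix.mul_smul, smul_sub, smul_add, smul_smul,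
      Complex.I_mul_I, neg_one_smul, neg_smul, neg_neg, one_smul]
    module
  · simp only [Matrix.mul_add, Matrix.add_mul, Matrix.sub_mul, Matrix.mul_sub,
      Matrix.mul_one, Matrix.one_mul, Matrix.mul_smul, Matrix.smul_mul, smul_smul,
      Complex.I_mul_I, neg_one_smul, smul_sub, smul_add, neg_mul, Matrix.neg_mul,
      neg_smul, neg_neg, Matrix.mul_assoc]
    rw [hcore]
    simp only [Matrix.mul_sub, Matrix.mul_smul, smul_sub, smul_add, smul_smul,
      Complex.I_mul_I, neg_one_smul, neg_smul, neg_neg, one_smul]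
    module
end

section
/- Let α be an n×n complex matrix, S₀ a Hermitian n×n matrix, γ₁ an n×m₁ matrix, γ an n×m₂ matrix, and s an invertible n×n matrix; set α̃ = sαs⁻¹, S̃₀ = sS₀s*, γ̃₁ = sγ₁, γ̃ = sγ. For real x define S(x) = S₀ + ∫₀ˣ (e^{−itα}γ₁γ₁*e^{itα*} + e^{itα}γγ*e^{−itα*}) dt and S̃(x) = S̃₀ + ∫₀ˣ (e^{−itα̃}γ̃₁γ̃₁*e^{itα̃*} + e^{itα̃}γ̃γ̃*e^{−itα̃*}) dt. Then S̃(x) = sS(x)s* for all real x; moreover, for every x at which S(x) is invertible, S̃(x) is invertible and the potentials v(x) = −2iγ₁*e^{ixα*}S(x)⁻¹e^{ixα}γ and ṽ(x) = −2iγ̃₁*e^{ixα̃*}S̃(x)⁻¹e^{ixα̃}γ̃ coincide: ṽ(x) = v(x). -/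
open Matrix

private lemma contExpAux {n : ℕ} (A : Matrix (Fin n) (Fin n) ℂ) {f : ℝ → ℂ}
    (hf : Continuous f) :
    Continuous fun t : ℝ => NormedSpace.exp (f t • A) := by
  letI : SeminormedRing (Matrix (Fin n) (Fin n) ℂ) := Matrix.linftyOpSemiNormedRing
  letI : NormedRing (Matrix (Fin n) (Fin n) ℂ) := Matrix.linftyOpNormedRing
  letI : NormedAlgebra ℂ (Matrix (Fin n) (Fin n) ℂ) := Matrix.linftyOpNormedAlgebra
  letI : NormedAlgebra ℚ (Matrix (Fin n) (Fin n) ℂ) :=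
    NormedAlgebra.restrictScalars ℚ ℂ (Matrix (Fin n) (Fin n) ℂ)
  exact NormedSpace.exp_continuous.comp (hf.smul continuous_const)

private lemma conjIntegralAux {n : ℕ} (s : Matrix (Fin n) (Fin n) ℂ)
    (M : ℝ → Matrix (Fin n) (Fin n) ℂ)
    (hM : ∀ j l, Continuous fun t : ℝ => M t j l) (x : ℝ) :
    (Matrix.of fun i k => ∫ t in (0:ℝ)..x, (s * M t * sᴴ) i k) =
      s * (Matrix.of fun i k => ∫ t in (0:ℝ)..x, M t i k) * sᴴ := by
  ext i k
  simp only [Matrix.of_apply, Matrix.mul_apply, Finset.sum_mul]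
  rw [intervalIntegral.integral_finset_sum (fun l _ => by
    apply Continuous.intervalIntegrable
    exact (continuous_finset_sum _ fun j _ =>
      ((continuous_const.mul (hM j l)).mul continuous_const)))]
  refine Finset.sum_congr rfl fun l _ => ?_
  rw [intervalIntegral.integral_finset_sum (fun j _ => by
    apply Continuous.intervalIntegrable
    exact ((continuous_const.mul (hM j l)).mul continuous_const))]
  refine Finset.sum_congr rfl fun j _ => ?_
  rw [intervalIntegral.integral_mul_const, intervalIntegral.integral_const_mul]

/-- Similarity invariance of the pseudo-exponential potential (uniqueness argument of
Theorem 2.3): if `α̃ = sαs⁻¹`, `S̃₀ = sS₀sᴴ`, `γ̃₁ = sγ₁`, `γ̃ = sγ`, then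
`S̃(x) = sS(x)sᴴ` and the potentials `v` and `ṽ` of formulas (1.3)-(1.4) coincide
wherever `S(x)` is invertible. -/
theorem potential_similarity_invariance
    (n m₁ m₂ : ℕ)
    (α S₀ : Matrix (Fin n) (Fin n) ℂ) (hS₀ : S₀.IsHermitian)
    (γ₁ : Matrix (Fin n) (Fin m₁) ℂ) (γ : Matrix (Fin n) (Fin m₂) ℂ)
    (s : Matrix (Fin n) (Fin n) ℂ) (hs : IsUnit s)
    (αt S₀t : Matrix (Fin n) (Fin n) ℂ)
    (γ₁t : Matrix (Fin n) (Fin m₁) ℂ) (γt : Matrix (Fin n) (Fin m₂) ℂ)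
    (hαt : αt = s * α * s⁻¹) (hS₀t : S₀t = s * S₀ * sᴴ)
    (hγ₁t : γ₁t = s * γ₁) (hγt : γt = s * γ)
    (S St : ℝ → Matrix (Fin n) (Fin n) ℂ)
    (hS : ∀ x : ℝ, S x = S₀ + Matrix.of fun i k =>
      ∫ t in (0:ℝ)..x,
        (NormedSpace.exp ((-(Complex.I * (t : ℂ))) • α) * γ₁ * γ₁ᴴ *
           NormedSpace.exp ((Complex.I * (t : ℂ)) • αᴴ) +
         NormedSpace.exp ((Complex.I * (t : ℂ)) • α) * γ * γᴴ *
           NormedSpace.exp ((-(Complex.I * (t : ℂ))) • αᴴ)) i k)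
    (hSt : ∀ x : ℝ, St x = S₀t + Matrix.of fun i k =>
      ∫ t in (0:ℝ)..x,
        (NormedSpace.exp ((-(Complex.I * (t : ℂ))) • αt) * γ₁t * γ₁tᴴ *
           NormedSpace.exp ((Complex.I * (t : ℂ)) • αtᴴ) +
         NormedSpace.exp ((Complex.I * (t : ℂ)) • αt) * γt * γtᴴ *
           NormedSpace.exp ((-(Complex.I * (t : ℂ))) • αtᴴ)) i k)
    (v vt : ℝ → Matrix (Fin m₁) (Fin m₂) ℂ)
    (hv : ∀ x : ℝ, v x = (-(2 * Complex.I)) •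
      (γ₁ᴴ * NormedSpace.exp ((Complex.I * (x : ℂ)) • αᴴ) * (S x)⁻¹ *
        NormedSpace.exp ((Complex.I * (x : ℂ)) • α) * γ))
    (hvt : ∀ x : ℝ, vt x = (-(2 * Complex.I)) •
      (γ₁tᴴ * NormedSpace.exp ((Complex.I * (x : ℂ)) • αtᴴ) * (St x)⁻¹ *
        NormedSpace.exp ((Complex.I * (x : ℂ)) • αt) * γt)) :
    (∀ x : ℝ, St x = s * S x * sᴴ) ∧
    (∀ x : ℝ, IsUnit (S x) → IsUnit (St x) ∧ vt x = v x) := by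
  have hdet : IsUnit s.det := (Matrix.isUnit_iff_isUnit_det s).mp hs
  have hdetH : IsUnit sᴴ.det := by
    rw [Matrix.det_conjTranspose]; exact hdet.star
  have hsH : IsUnit sᴴ := (Matrix.isUnit_iff_isUnit_det _).mpr hdetH
  have hαtH : αtᴴ = (sᴴ)⁻¹ * αᴴ * sᴴ := by
    rw [hαt]
    simp [Matrix.conjTranspose_mul, Matrix.conjTranspose_nonsing_inv, Matrix.mul_assoc]
  have kexp1 : ∀ c : ℂ, NormedSpace.exp (c • αt) = s * NormedSpace.exp (c • α) * s⁻¹ := by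
    intro c
    have h1 : c • αt = s * (c • α) * s⁻¹ := by rw [hαt, mul_smul_comm, smul_mul_assoc]
    rw [h1]; exact Matrix.exp_conj s (c • α) hs
  have kexp2 : ∀ c : ℂ,
      NormedSpace.exp (c • αtᴴ) = (sᴴ)⁻¹ * NormedSpace.exp (c • αᴴ) * sᴴ := by
    intro c
    have h1 : c • αtᴴ = (sᴴ)⁻¹ * (c • αᴴ) * sᴴ := by rw [hαtH, mul_smul_comm, smul_mul_assoc]
    rw [h1]; exact Matrix.exp_conj' sᴴ (c • αᴴ) hsH
  have hconji : ∀ t : ℝ,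
      (NormedSpace.exp ((-(Complex.I * (t : ℂ))) • αt) * γ₁t * γ₁tᴴ *
           NormedSpace.exp ((Complex.I * (t : ℂ)) • αtᴴ) +
         NormedSpace.exp ((Complex.I * (t : ℂ)) • αt) * γt * γtᴴ *
           NormedSpace.exp ((-(Complex.I * (t : ℂ))) • αtᴴ)) =
      s * (NormedSpace.exp ((-(Complex.I * (t : ℂ))) • α) * γ₁ * γ₁ᴴ *
           NormedSpace.exp ((Complex.I * (t : ℂ)) • αᴴ) +
         NormedSpace.exp ((Complex.I * (t : ℂ)) • α) * γ * γᴴ *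
           NormedSpace.exp ((-(Complex.I * (t : ℂ))) • αᴴ)) * sᴴ := by
    intro t
    rw [kexp1, kexp1, kexp2, kexp2, hγ₁t, hγt, Matrix.conjTranspose_mul,
      Matrix.conjTranspose_mul, mul_add, add_mul]
    congr 1 <;>
      · simp only [Matrix.mul_assoc]
        rw [Matrix.nonsing_inv_mul_cancel_left s _ hdet,
          Matrix.mul_nonsing_inv_cancel_left sᴴ _ hdetH]
  have hfc1 : Continuous fun t : ℝ => -(Complex.I * (t : ℂ)) :=
    (continuous_const.mul Complex.continuous_ofReal).neg
  have hfc2 : Continuous fun t : ℝ => Complex.I * (t : ℂ) :=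
    continuous_const.mul Complex.continuous_ofReal
  have hMc : ∀ j l : Fin n, Continuous fun t : ℝ =>
      (NormedSpace.exp ((-(Complex.I * (t : ℂ))) • α) * γ₁ * γ₁ᴴ *
           NormedSpace.exp ((Complex.I * (t : ℂ)) • αᴴ) +
         NormedSpace.exp ((Complex.I * (t : ℂ)) • α) * γ * γᴴ *
           NormedSpace.exp ((-(Complex.I * (t : ℂ))) • αᴴ)) j l := by
    intro j l
    exact (((((contExpAux α hfc1).matrix_mul continuous_const).matrix_mul
      continuous_const).matrix_mul (contExpAux αᴴ hfc2)).add
      ((((contExpAux α hfc2).matrix_mul continuous_const).matrix_mul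
      continuous_const).matrix_mul (contExpAux αᴴ hfc1))).matrix_elem j l
  have part1 : ∀ x : ℝ, St x = s * S x * sᴴ := by
    intro x
    rw [hSt, hS, hS₀t, mul_add, add_mul]
    congr 1
    simp only [hconji]
    exact conjIntegralAux s _ hMc x
  refine ⟨part1, fun x hSx => ?_⟩
  have h1 : St x = s * S x * sᴴ := part1 x
  have hu : IsUnit (St x) := h1 ▸ (hs.mul hSx).mul hsH
  refine ⟨hu, ?_⟩
  rw [hvt, hv]
  congr 1
  rw [hγ₁t, hγt, kexp1, kexp2, h1, Matrix.conjTranspose_mul, Matrix.mul_inv_rev,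
    Matrix.mul_inv_rev]
  simp only [Matrix.mul_assoc]
  rw [Matrix.mul_nonsing_inv_cancel_left sᴴ _ hdetH,
    Matrix.mul_nonsing_inv_cancel_left sᴴ _ hdetH,
    Matrix.nonsing_inv_mul_cancel_left s _ hdet,
    Matrix.nonsing_inv_mul_cancel_left s _ hdet]
end
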